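/- If PA proves ψ → φ where φ ∈ 𝒱_{k+1} and ψ ∈ 𝒬_{k+1}, then HA + Σ_k-LEM proves ψ → φ. -/

import Mathlib

namespace SemiClassicalArith

/-- Terms of arithmetic: variables (de Bruijn indices) and function symbols
(one symbol of each arity for every code, covering all primitive recursive functions). -/
inductive Term : Type
  | var : ℕ → Term
  | func : (code : ℕ) → (arity : ℕ) → (Fin arity → Term) → Term

namespace Term

/-- Shift all variables `≥ d` up by one. -/
def lift (d : ℕ) : Term → Term
  | var n => if n < d then var n else var (n + 1)
  | func c a ts => func c a fun i => (ts i).lift d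

/-- Binder-removing substitution of `s` for variable `k`. -/
def subst (k : ℕ) (s : Term) : Term → Term
  | var n => if n < k then var n else if n = k then s else var (n - 1)
  | func c a ts => func c a fun i => Term.subst k s (ts i)

/-- In-place replacement of variable `k` by `s` (no shifting of other variables). -/
def repl (k : ℕ) (s : Term) : Term → Term
  | var n => if n = k then s else var n
  | func c a ts => func c a fun i => Term.repl k s (ts i)

/-- Free variables of a term. -/
def fv : Term → Finset ℕ
  | var n => {n}
  | func _ _ ts => Finset.univ.sup fun i => (ts i).fv

/-- The constant zero (function symbol of arity 0, code 0). -/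
def zero : Term := func 0 0 (fun i => i.elim0)

/-- Successor (function symbol of arity 1, code 1). -/
def succ (t : Term) : Term := func 1 1 (fun _ => t)

end Term

/-- Formulas of arithmetic in the language with an extra nullary predicate
symbol `$` (`dollar`), used as a place holder. Quantifiers use de Bruijn indices. -/
inductive Formula : Type
  | falsum : Formula
  | dollar : Formula
  | eq : Term → Term → Formula
  | and : Formula → Formula → Formula
  | or : Formula → Formula → Formula
  | imp : Formula → Formula → Formula
  | all : Formula → Formula
  | ex : Formula → Formula

namespace Formula

def neg (φ : Formula) : Formula := φ.imp falsum

def iff (φ ψ : Formula) : Formula := (φ.imp ψ).and (ψ.imp φ)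

/-- `¬_$ φ`, i.e. `φ → $`. -/
def negD (φ : Formula) : Formula := φ.imp dollar

def lift (d : ℕ) : Formula → Formula
  | falsum => falsum
  | dollar => dollar
  | eq t u => eq (t.lift d) (u.lift d)
  | and φ ψ => and (φ.lift d) (ψ.lift d)
  | or φ ψ => or (φ.lift d) (ψ.lift d)
  | imp φ ψ => imp (φ.lift d) (ψ.lift d)
  | all φ => all (φ.lift (d + 1))
  | ex φ => ex (φ.lift (d + 1))

/-- Binder-removing substitution of term `s` for variable `k`. -/
def subst (k : ℕ) (s : Term) : Formula → Formula
  | falsum => falsum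
  | dollar => dollar
  | eq t u => eq (Term.subst k s t) (Term.subst k s u)
  | and φ ψ => and (Formula.subst k s φ) (Formula.subst k s ψ)
  | or φ ψ => or (Formula.subst k s φ) (Formula.subst k s ψ)
  | imp φ ψ => imp (Formula.subst k s φ) (Formula.subst k s ψ)
  | all φ => all (Formula.subst (k + 1) (s.lift 0) φ)
  | ex φ => ex (Formula.subst (k + 1) (s.lift 0) φ)

/-- In-place replacement of variable `k` by term `s`. -/
def repl (k : ℕ) (s : Term) : Formula → Formula
  | falsum => falsum
  | dollar => dollar
  | eq t u => eq (Term.repl k s t) (Term.repl k s u)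
  | and φ ψ => and (Formula.repl k s φ) (Formula.repl k s ψ)
  | or φ ψ => or (Formula.repl k s φ) (Formula.repl k s ψ)
  | imp φ ψ => imp (Formula.repl k s φ) (Formula.repl k s ψ)
  | all φ => all (Formula.repl (k + 1) (s.lift 0) φ)
  | ex φ => ex (Formula.repl (k + 1) (s.lift 0) φ)

/-- Free variables of a formula. -/
def fv : Formula → Finset ℕ
  | falsum => ∅
  | dollar => ∅
  | eq t u => t.fv ∪ u.fv
  | and φ ψ => φ.fv ∪ ψ.fv
  | or φ ψ => φ.fv ∪ ψ.fv
  | imp φ ψ => φ.fv ∪ ψ.fv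
  | all φ => (φ.fv.erase 0).image (· - 1)
  | ex φ => (φ.fv.erase 0).image (· - 1)

/-- A sentence is a formula with no free variables. -/
def sentence (φ : Formula) : Prop := φ.fv = ∅

/-- The formula is in the language of `HA` (the placeholder `$` does not occur). -/
def noDollar : Formula → Prop
  | falsum => True
  | dollar => False
  | eq _ _ => True
  | and φ ψ => φ.noDollar ∧ ψ.noDollar
  | or φ ψ => φ.noDollar ∧ ψ.noDollar
  | imp φ ψ => φ.noDollar ∧ ψ.noDollar
  | all φ => φ.noDollar
  | ex φ => φ.noDollar

/-- Quantifier-free formula of `HA`. -/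
def isQF : Formula → Prop
  | falsum => True
  | dollar => False
  | eq _ _ => True
  | and φ ψ => φ.isQF ∧ ψ.isQF
  | or φ ψ => φ.isQF ∧ ψ.isQF
  | imp φ ψ => φ.isQF ∧ ψ.isQF
  | all _ => False
  | ex _ => False

/-- Flip `+`/`-` in an alternation path (`true` = `+`, `false` = `-`). -/
def pflip (s : List Bool) : List Bool := s.map (!·)

/-- The set of alternation paths of a formula (Akama–Berardi–Hayashi–Kohlenbach). -/
def alt : Formula → Finset (List Bool)
  | falsum => {([] : List Bool)}
  | dollar => {([] : List Bool)}
  | eq _ _ => {([] : List Bool)}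
  | and φ ψ => φ.alt ∪ ψ.alt
  | or φ ψ => φ.alt ∪ ψ.alt
  | imp φ ψ => φ.alt.image pflip ∪ ψ.alt
  | all φ => φ.alt.image (fun s => if s.head? = some false then s else false :: s)
  | ex φ => φ.alt.image (fun s => if s.head? = some true then s else true :: s)

/-- The degree of a formula: the maximal length of its alternation paths. -/
def degree (φ : Formula) : ℕ := φ.alt.sup List.length

/-- The class `U_k` (for `k ≥ 1`: degree `k` and all maximal paths begin with `-`;
`U_0` is the class of degree-`0` formulas). -/
def inU (k : ℕ) (φ : Formula) : Prop :=
  φ.degree = k ∧ ∀ s ∈ φ.alt, s.length = k → k = 0 ∨ s.head? = some false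

/-- The class `E_k` (for `k ≥ 1`: degree `k` and all maximal paths begin with `+`;
`E_0` is the class of degree-`0` formulas). -/
def inE (k : ℕ) (φ : Formula) : Prop :=
  φ.degree = k ∧ ∀ s ∈ φ.alt, s.length = k → k = 0 ∨ s.head? = some true

/-- The dual of a prenex formula: swap quantifiers and negate the matrix. -/
def dual : Formula → Formula
  | all φ => ex φ.dual
  | ex φ => all φ.dual
  | φ => φ.neg

/-- The `$`-translation (Ishihara's generalized negative translation). -/
def dollarTr : Formula → Formula
  | falsum => dollar
  | dollar => dollar
  | eq t u => (eq t u).negD.negD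
  | and φ ψ => and φ.dollarTr ψ.dollarTr
  | or φ ψ => (or φ.dollarTr ψ.dollarTr).negD.negD
  | imp φ ψ => imp φ.dollarTr ψ.dollarTr
  | all φ => all φ.dollarTr
  | ex φ => (ex φ.dollarTr).negD.negD

/-- The Friedman A-translation: replace every prime formula `P` (including `⊥`)
by `P ∨ *` (here `*` is the placeholder `dollar`). -/
def aTr : Formula → Formula
  | falsum => or falsum dollar
  | dollar => dollar
  | eq t u => or (eq t u) dollar
  | and φ ψ => and φ.aTr ψ.aTr
  | or φ ψ => or φ.aTr ψ.aTr
  | imp φ ψ => imp φ.aTr ψ.aTr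
  | all φ => all φ.aTr
  | ex φ => ex φ.aTr

/-- Prefix `n` universal quantifiers. -/
def allN : Formula → ℕ → Formula
  | φ, 0 => φ
  | φ, n + 1 => Formula.allN φ.all n

/-- The universal closure of a formula. -/
def univClosure (φ : Formula) : Formula := φ.allN (φ.fv.sup Nat.succ)

end Formula

mutual
  /-- The class `Σ_k` of prenex formulas. -/
  inductive IsSigma : ℕ → Formula → Prop
    | qf {φ : Formula} : φ.isQF → IsSigma 0 φ
    | ofPi {k : ℕ} {φ : Formula} : IsPi k φ → IsSigma (k + 1) φ
    | ex {k : ℕ} {φ : Formula} : IsSigma (k + 1) φ → IsSigma (k + 1) φ.ex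
  /-- The class `Π_k` of prenex formulas. -/
  inductive IsPi : ℕ → Formula → Prop
    | qf {φ : Formula} : φ.isQF → IsPi 0 φ
    | ofSigma {k : ℕ} {φ : Formula} : IsSigma k φ → IsPi (k + 1) φ
    | all {k : ℕ} {φ : Formula} : IsPi (k + 1) φ → IsPi (k + 1) φ.all
end

/-- Axioms of Heyting arithmetic `HA` (Hilbert style intuitionistic predicate logic
with equality, plus arithmetical axioms and the induction scheme). -/
inductive HAAx : Formula → Prop
  | axK (φ ψ : Formula) : HAAx (φ.imp (ψ.imp φ))
  | axS (φ ψ χ : Formula) : HAAx ((φ.imp (ψ.imp χ)).imp ((φ.imp ψ).imp (φ.imp χ)))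
  | andI (φ ψ : Formula) : HAAx (φ.imp (ψ.imp (φ.and ψ)))
  | andE1 (φ ψ : Formula) : HAAx ((φ.and ψ).imp φ)
  | andE2 (φ ψ : Formula) : HAAx ((φ.and ψ).imp ψ)
  | orI1 (φ ψ : Formula) : HAAx (φ.imp (φ.or ψ))
  | orI2 (φ ψ : Formula) : HAAx (ψ.imp (φ.or ψ))
  | orE (φ ψ χ : Formula) : HAAx ((φ.imp χ).imp ((ψ.imp χ).imp ((φ.or ψ).imp χ)))
  | efq (φ : Formula) : HAAx (Formula.falsum.imp φ)
  | allE (φ : Formula) (t : Term) : HAAx (φ.all.imp (φ.subst 0 t))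
  | exI (φ : Formula) (t : Term) : HAAx ((φ.subst 0 t).imp φ.ex)
  | allK (φ ψ : Formula) : HAAx ((φ.imp ψ).all.imp (φ.all.imp ψ.all))
  | allVac (φ : Formula) : HAAx (φ.imp (φ.lift 0).all)
  | exE (φ ψ : Formula) : HAAx ((φ.imp (ψ.lift 0)).all.imp (φ.ex.imp ψ))
  | eqRefl (t : Term) : HAAx (Formula.eq t t)
  | eqSubst (t u : Term) (φ : Formula) : HAAx ((Formula.eq t u).imp ((φ.subst 0 t).imp (φ.subst 0 u)))
  | succNeZero (t : Term) : HAAx (Formula.neg (Formula.eq (Term.succ t) Term.zero))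
  | succInj (t u : Term) : HAAx ((Formula.eq (Term.succ t) (Term.succ u)).imp (Formula.eq t u))
  | ind (φ : Formula) : HAAx ((φ.subst 0 Term.zero).imp
      ((((φ.imp (φ.repl 0 (Term.succ (Term.var 0))))).all).imp φ.all))
  | atomDec (t u : Term) : HAAx ((Formula.eq t u).or (Formula.eq t u).neg)

/-- Provability from `HA` (in the language possibly containing `$`)
together with the extra axioms `T`. -/
inductive Proves (T : Set Formula) : Formula → Prop
  | ax {φ : Formula} : φ ∈ T → Proves T φ
  | ha {φ : Formula} : HAAx φ → Proves T φ
  | mp {φ ψ : Formula} : Proves T (φ.imp ψ) → Proves T φ → Proves T ψ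
  | gen {φ : Formula} : Proves T φ → Proves T φ.all

/-- The scheme `Σ_k-LEM`. -/
def sigLEM (k : ℕ) : Set Formula := {ψ | ∃ φ : Formula, IsSigma k φ ∧ ψ = φ.or φ.neg}

/-- The full law of excluded middle for `HA`-formulas; `Proves lemSet` is `PA`-provability. -/
def lemSet : Set Formula := {ψ | ∃ φ : Formula, φ.noDollar ∧ ψ = φ.or φ.neg}

/-- The scheme `F_k-LEM`: excluded middle for `HA`-formulas of degree at most `k`. -/
def fLEM (k : ℕ) : Set Formula :=
  {ψ | ∃ φ : Formula, φ.noDollar ∧ φ.degree ≤ k ∧ ψ = φ.or φ.neg}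

/-- `T` is (the set of extra axioms of) a semi-classical arithmetic:
`HA ⊆ HA + T ⊆ PA`, i.e. all axioms are `HA`-formulas provable in `PA`. -/
def IsSemiClassical (T : Set Formula) : Prop :=
  ∀ φ ∈ T, φ.noDollar ∧ Proves lemSet φ

mutual
  /-- The class `ℛ_{k+1}` (index `k` denotes `ℛ_{k+1}`). -/
  inductive Rcl : ℕ → Formula → Prop
    | base {k : ℕ} {φ : Formula} : φ.degree ≤ k → φ.noDollar → Rcl k φ
    | and {k : ℕ} {φ ψ : Formula} : Rcl k φ → Rcl k ψ → Rcl k (φ.and ψ)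
    | or {k : ℕ} {φ ψ : Formula} : Rcl k φ → Rcl k ψ → Rcl k (φ.or ψ)
    | all {k : ℕ} {φ : Formula} : Rcl k φ → Rcl k φ.all
    | imp {k : ℕ} {φ ψ : Formula} : Jcl k φ → Rcl k ψ → Rcl k (φ.imp ψ)
  /-- The class `𝒥_{k+1}` (index `k` denotes `𝒥_{k+1}`). -/
  inductive Jcl : ℕ → Formula → Prop
    | base {k : ℕ} {φ : Formula} : φ.degree ≤ k → φ.noDollar → Jcl k φ
    | and {k : ℕ} {φ ψ : Formula} : Jcl k φ → Jcl k ψ → Jcl k (φ.and ψ)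
    | or {k : ℕ} {φ ψ : Formula} : Jcl k φ → Jcl k ψ → Jcl k (φ.or ψ)
    | ex {k : ℕ} {φ : Formula} : Jcl k φ → Jcl k φ.ex
    | imp {k : ℕ} {φ ψ : Formula} : Rcl k φ → Jcl k ψ → Jcl k (φ.imp ψ)
end

/-- The class `𝒬_{k+1}` (index `k` denotes `𝒬_{k+1}`): generated from prime formulas by
`∧, ∨, ∀, ∃` and implications `J → Q` with `J ∈ 𝒥_{k+1}`. -/
inductive Qcl : ℕ → Formula → Prop
  | falsum {k : ℕ} : Qcl k Formula.falsum
  | eq {k : ℕ} {t u : Term} : Qcl k (Formula.eq t u)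
  | and {k : ℕ} {φ ψ : Formula} : Qcl k φ → Qcl k ψ → Qcl k (φ.and ψ)
  | or {k : ℕ} {φ ψ : Formula} : Qcl k φ → Qcl k ψ → Qcl k (φ.or ψ)
  | all {k : ℕ} {φ : Formula} : Qcl k φ → Qcl k φ.all
  | ex {k : ℕ} {φ : Formula} : Qcl k φ → Qcl k φ.ex
  | imp {k : ℕ} {φ ψ : Formula} : Jcl k φ → Qcl k ψ → Qcl k (φ.imp ψ)

/-- The class `𝒱_{k+1}` (index `k` denotes `𝒱_{k+1}`): generated from `𝒥_{k+1}` by `∧, ∀`. -/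
inductive Vcl : ℕ → Formula → Prop
  | ofJ {k : ℕ} {φ : Formula} : Jcl k φ → Vcl k φ
  | and {k : ℕ} {φ ψ : Formula} : Vcl k φ → Vcl k ψ → Vcl k (φ.and ψ)
  | all {k : ℕ} {φ : Formula} : Vcl k φ → Vcl k φ.all

/-- The class `EΠ_k`: generated from `Π_k` formulas by `∨` and `∀`. -/
inductive EPi (k : ℕ) : Formula → Prop
  | ofPi {φ : Formula} : IsPi k φ → EPi k φ
  | or {φ ψ : Formula} : EPi k φ → EPi k ψ → EPi k (φ.or ψ)
  | all {φ : Formula} : EPi k φ → EPi k φ.all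

/-- The class `EΣ_{k+1}` (index `k` denotes `EΣ_{k+1}`): existential quantifications
of `EΠ_k` formulas. -/
inductive ESig (k : ℕ) : Formula → Prop
  | ofEPi {φ : Formula} : EPi k φ → ESig k φ
  | ex {φ : Formula} : ESig k φ → ESig k φ.ex

/-- The scheme `Γ-DNEC`: universal closure of `¬¬φ` implies universal closure of `φ`. -/
def dnecSet (Γ : Set Formula) : Set Formula :=
  {ψ | ∃ φ ∈ Γ, ψ = (φ.neg.neg.univClosure).imp φ.univClosure}

/-- The scheme `Γ-DNSC`: universal closure of `¬¬φ` implies `¬¬` of the universal closure. -/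
def dnscSet (Γ : Set Formula) : Set Formula :=
  {ψ | ∃ φ ∈ Γ, ψ = (φ.neg.neg.univClosure).imp φ.univClosure.neg.neg}

/-- Double-negation elimination for sentences in `Γ`. -/
def dneSentSet (Γ : Set Formula) : Set Formula :=
  {ψ | ∃ φ ∈ Γ, φ.sentence ∧ ψ = φ.neg.neg.imp φ}


/-! ### Section 1: de Bruijn lemmas for terms -/

namespace Term

theorem lift_lift (d e : ℕ) (h : d ≤ e) :
    ∀ t : Term, lift (e+1) (lift d t) = lift d (lift e t)
  | var n => by
      rcases Nat.lt_or_ge n d with h1 | h1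
      · have h2 : n < e := lt_of_lt_of_le h1 h
        have h3 : n < e + 1 := by omega
        simp [lift, h1, h2, h3]
      · rcases Nat.lt_or_ge n e with h2 | h2
        · have h3 : ¬ n < d := by omega
          have h4 : n + 1 < e + 1 := by omega
          simp [lift, h3, h2, h4]
        · have h3 : ¬ n < d := by omega
          have h4 : ¬ n < e := by omega
          have h5 : ¬ n + 1 < e + 1 := by omega
          have h6 : ¬ n + 1 < d := by omega
          simp [lift, h3, h4, h5, h6]
  | func c a ts => by
      simp only [lift, func.injEq, heq_eq_eq, true_and]
      funext i; exact lift_lift d e h (ts i)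

theorem subst_lift_self (k : ℕ) (s : Term) :
    ∀ t : Term, subst k s (lift k t) = t
  | var n => by
      by_cases h : n < k
      · simp [lift, subst, h]
      · have h1 : ¬ (n+1 < k) := by omega
        have h2 : ¬ (n+1 = k) := by omega
        simp [lift, subst, h, h1, h2]
  | func c a ts => by
      simp only [lift, subst, func.injEq, heq_eq_eq, true_and]
      funext i; exact subst_lift_self k s (ts i)

/-- `lift d (subst k s u) = subst k (lift d s) (lift (d+1) u)` for `k ≤ d`. -/
theorem lift_subst (k d : ℕ) (h : k ≤ d) (s : Term) :
    ∀ t : Term, lift d (subst k s t) = subst k (lift d s) (lift (d+1) t)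
  | var n => by
      rcases Nat.lt_trichotomy n k with h1 | h1 | h1
      · have h2 : n < d := by omega
        have h3 : n < d + 1 := by omega
        simp [lift, subst, h1, h2, h3]
      · subst h1
        have h2 : n < d + 1 := by omega
        simp [lift, subst, h2]
      · have h2 : ¬ n < k := by omega
        have h3 : n ≠ k := by omega
        by_cases h4 : n < d + 1
        · have h5 : n - 1 < d := by omega
          simp [lift, subst, h2, h3, h4, h5]
        · have h5 : ¬ n - 1 < d := by omega
          have h6 : ¬ n + 1 < k := by omega
          have h7 : n + 1 ≠ k := by omega
          have h8 : n - 1 + 1 = n + 1 - 1 := by omega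
          simp [lift, subst, h2, h3, h4, h5, h6, h7, h8]
  | func c a ts => by
      simp only [lift, subst, func.injEq, heq_eq_eq, true_and]
      funext i; exact lift_subst k d h s (ts i)

/-- `lift d (repl k s u) = repl k (lift d s) (lift d u)` for `k < d`. -/
theorem lift_repl (k d : ℕ) (h : k < d) (s : Term) :
    ∀ t : Term, lift d (repl k s t) = repl k (lift d s) (lift d t)
  | var n => by
      by_cases h1 : n = k
      · subst h1
        have h2 : n < d := h
        simp [lift, repl, h2]
      · by_cases h2 : n < d
        · simp [lift, repl, h1, h2]
        · have h3 : n + 1 ≠ k := by omega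
          simp [lift, repl, h1, h2, h3]
  | func c a ts => by
      simp only [lift, repl, func.injEq, heq_eq_eq, true_and]
      funext i; exact lift_repl k d h s (ts i)

/-- `subst (k+1) (lift d s) (lift d t) = lift d (subst k s t)` for `d ≤ k`. -/
theorem subst_lift_comm (k d : ℕ) (h : d ≤ k) (s : Term) :
    ∀ t : Term, subst (k+1) (lift d s) (lift d t) = lift d (subst k s t)
  | var n => by
      rcases Nat.lt_trichotomy n k with h1 | h1 | h1
      · by_cases h2 : n < d
        · have h3 : n < k + 1 := by omega
          simp [lift, subst, h1, h2, h3]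
        · have h3 : n + 1 < k + 1 := by omega
          simp [lift, subst, h1, h2, h3]
      · subst h1
        have h2 : ¬ n < d := by omega
        have h3 : ¬ n + 1 < n + 1 := by omega
        simp [lift, subst, h2, h3]
      · have h2 : ¬ n < d := by omega
        have h3 : ¬ n + 1 < k + 1 := by omega
        have h4 : n + 1 ≠ k + 1 := by omega
        have h5 : ¬ n < k := by omega
        have h6 : n ≠ k := by omega
        have h7 : ¬ n - 1 < d := by omega
        have h8 : n + 1 - 1 = n - 1 + 1 := by omega
        simp [lift, subst, h2, h3, h4, h5, h6, h7, h8]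
  | func c a ts => by
      simp only [lift, subst, func.injEq, heq_eq_eq, true_and]
      funext i; exact subst_lift_comm k d h s (ts i)

/-- `repl (k+1) (lift d s) (lift d t) = lift d (repl k s t)` for `d ≤ k`. -/
theorem repl_lift_comm (k d : ℕ) (h : d ≤ k) (s : Term) :
    ∀ t : Term, repl (k+1) (lift d s) (lift d t) = lift d (repl k s t)
  | var n => by
      by_cases h1 : n = k
      · subst h1
        have h2 : ¬ n < d := by omega
        simp [lift, repl, h2]
      · by_cases h2 : n < d
        · have h3 : n ≠ k + 1 := by omega
          simp [lift, repl, h1, h2, h3]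
        · by_cases h3 : n + 1 = k + 1
          · exact absurd (by omega : n = k) h1
          · simp [lift, repl, h1, h2, h3]
  | func c a ts => by
      simp only [lift, repl, func.injEq, heq_eq_eq, true_and]
      funext i; exact repl_lift_comm k d h s (ts i)

/-- replacing a variable that does not occur after lifting. -/
theorem repl_lift_self (k : ℕ) (s : Term) :
    ∀ t : Term, repl k s (lift k t) = lift k t
  | var n => by
      by_cases h : n < k
      · have h1 : n ≠ k := by omega
        simp [lift, repl, h, h1]
      · have h1 : n + 1 ≠ k := by omega
        simp [lift, repl, h, h1]
  | func c a ts => by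
      simp only [lift, repl, func.injEq, heq_eq_eq, true_and]
      funext i; exact repl_lift_self k s (ts i)

/-- `subst d (var d) (lift (d+1) t) = t`. -/
theorem subst_var_lift (d : ℕ) :
    ∀ t : Term, subst d (var d) (lift (d+1) t) = t
  | var n => by
      rcases Nat.lt_trichotomy n d with h1 | h1 | h1
      · have h2 : n < d + 1 := by omega
        simp [lift, subst, h1, h2]
      · subst h1
        have h2 : n < n + 1 := by omega
        have h3 : ¬ n < n := by omega
        simp [lift, subst, h2, h3]
      · have h2 : ¬ n < d + 1 := by omega
        have h3 : ¬ n + 1 < d := by omega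
        have h4 : n + 1 ≠ d := by omega
        simp [lift, subst, h2, h3, h4]
  | func c a ts => by
      simp only [lift, subst, func.injEq, heq_eq_eq, true_and]
      funext i; exact subst_var_lift d (ts i)

end Term
/-! ### Section 2: de Bruijn lemmas for formulas, `$`-substitution -/

namespace Formula

theorem lift_lift (d e : ℕ) (h : d ≤ e) :
    ∀ φ : Formula, lift (e+1) (lift d φ) = lift d (lift e φ)
  | falsum => rfl
  | dollar => rfl
  | eq t u => by simp [lift, Term.lift_lift d e h]
  | and φ ψ => by simp [lift, lift_lift d e h φ, lift_lift d e h ψ]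
  | or φ ψ => by simp [lift, lift_lift d e h φ, lift_lift d e h ψ]
  | imp φ ψ => by simp [lift, lift_lift d e h φ, lift_lift d e h ψ]
  | all φ => by simp [lift, lift_lift (d+1) (e+1) (by omega : d+1 ≤ e+1) φ]
  | ex φ => by simp [lift, lift_lift (d+1) (e+1) (by omega : d+1 ≤ e+1) φ]

theorem subst_lift_self (k : ℕ) (s : Term) :
    ∀ φ : Formula, subst k s (lift k φ) = φ
  | falsum => rfl
  | dollar => rfl
  | eq t u => by simp [lift, subst, Term.subst_lift_self]
  | and φ ψ => by simp [lift, subst, subst_lift_self k s φ, subst_lift_self k s ψ]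
  | or φ ψ => by simp [lift, subst, subst_lift_self k s φ, subst_lift_self k s ψ]
  | imp φ ψ => by simp [lift, subst, subst_lift_self k s φ, subst_lift_self k s ψ]
  | all φ => by simp [lift, subst, subst_lift_self (k+1) (Term.lift 0 s) φ]
  | ex φ => by simp [lift, subst, subst_lift_self (k+1) (Term.lift 0 s) φ]

theorem lift_subst (k d : ℕ) (h : k ≤ d) (s : Term) :
    ∀ φ : Formula, lift d (subst k s φ) = subst k (Term.lift d s) (lift (d+1) φ)
  | falsum => rfl
  | dollar => rfl
  | eq t u => by simp [lift, subst, Term.lift_subst k d h]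
  | and φ ψ => by simp [lift, subst, lift_subst k d h s φ, lift_subst k d h s ψ]
  | or φ ψ => by simp [lift, subst, lift_subst k d h s φ, lift_subst k d h s ψ]
  | imp φ ψ => by simp [lift, subst, lift_subst k d h s φ, lift_subst k d h s ψ]
  | all φ => by
      simp [lift, subst, lift_subst (k+1) (d+1) (by omega) (Term.lift 0 s) φ,
        Term.lift_lift 0 d (by omega)]
  | ex φ => by
      simp [lift, subst, lift_subst (k+1) (d+1) (by omega) (Term.lift 0 s) φ,
        Term.lift_lift 0 d (by omega)]

theorem lift_repl (k d : ℕ) (h : k < d) (s : Term) :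
    ∀ φ : Formula, lift d (repl k s φ) = repl k (Term.lift d s) (lift d φ)
  | falsum => rfl
  | dollar => rfl
  | eq t u => by simp [lift, repl, Term.lift_repl k d h]
  | and φ ψ => by simp [lift, repl, lift_repl k d h s φ, lift_repl k d h s ψ]
  | or φ ψ => by simp [lift, repl, lift_repl k d h s φ, lift_repl k d h s ψ]
  | imp φ ψ => by simp [lift, repl, lift_repl k d h s φ, lift_repl k d h s ψ]
  | all φ => by
      simp [lift, repl, lift_repl (k+1) (d+1) (by omega) (Term.lift 0 s) φ,
        Term.lift_lift 0 d (by omega)]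
  | ex φ => by
      simp [lift, repl, lift_repl (k+1) (d+1) (by omega) (Term.lift 0 s) φ,
        Term.lift_lift 0 d (by omega)]

theorem subst_lift_comm (k d : ℕ) (h : d ≤ k) (s : Term) :
    ∀ φ : Formula, subst (k+1) (Term.lift d s) (lift d φ) = lift d (subst k s φ)
  | falsum => rfl
  | dollar => rfl
  | eq t u => by simp [lift, subst, Term.subst_lift_comm k d h]
  | and φ ψ => by simp [lift, subst, subst_lift_comm k d h s φ, subst_lift_comm k d h s ψ]
  | or φ ψ => by simp [lift, subst, subst_lift_comm k d h s φ, subst_lift_comm k d h s ψ]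
  | imp φ ψ => by simp [lift, subst, subst_lift_comm k d h s φ, subst_lift_comm k d h s ψ]
  | all φ => by
      simp [lift, subst, ← subst_lift_comm (k+1) (d+1) (by omega) (Term.lift 0 s) φ,
        Term.lift_lift 0 d (by omega)]
  | ex φ => by
      simp [lift, subst, ← subst_lift_comm (k+1) (d+1) (by omega) (Term.lift 0 s) φ,
        Term.lift_lift 0 d (by omega)]

theorem repl_lift_comm (k d : ℕ) (h : d ≤ k) (s : Term) :
    ∀ φ : Formula, repl (k+1) (Term.lift d s) (lift d φ) = lift d (repl k s φ)
  | falsum => rfl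
  | dollar => rfl
  | eq t u => by simp [lift, repl, Term.repl_lift_comm k d h]
  | and φ ψ => by simp [lift, repl, repl_lift_comm k d h s φ, repl_lift_comm k d h s ψ]
  | or φ ψ => by simp [lift, repl, repl_lift_comm k d h s φ, repl_lift_comm k d h s ψ]
  | imp φ ψ => by simp [lift, repl, repl_lift_comm k d h s φ, repl_lift_comm k d h s ψ]
  | all φ => by
      simp [lift, repl, ← repl_lift_comm (k+1) (d+1) (by omega) (Term.lift 0 s) φ,
        Term.lift_lift 0 d (by omega)]
  | ex φ => by
      simp [lift, repl, ← repl_lift_comm (k+1) (d+1) (by omega) (Term.lift 0 s) φ,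
        Term.lift_lift 0 d (by omega)]

theorem repl_lift_self (k : ℕ) (s : Term) :
    ∀ φ : Formula, repl k s (lift k φ) = lift k φ
  | falsum => rfl
  | dollar => rfl
  | eq t u => by simp [lift, repl, Term.repl_lift_self]
  | and φ ψ => by simp [lift, repl, repl_lift_self k s φ, repl_lift_self k s ψ]
  | or φ ψ => by simp [lift, repl, repl_lift_self k s φ, repl_lift_self k s ψ]
  | imp φ ψ => by simp [lift, repl, repl_lift_self k s φ, repl_lift_self k s ψ]
  | all φ => by simp [lift, repl, repl_lift_self (k+1) (Term.lift 0 s) φ]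
  | ex φ => by simp [lift, repl, repl_lift_self (k+1) (Term.lift 0 s) φ]

theorem subst_var_lift (d : ℕ) :
    ∀ φ : Formula, subst d (Term.var d) (lift (d+1) φ) = φ
  | falsum => rfl
  | dollar => rfl
  | eq t u => by simp [lift, subst, Term.subst_var_lift]
  | and φ ψ => by simp [lift, subst, subst_var_lift d φ, subst_var_lift d ψ]
  | or φ ψ => by simp [lift, subst, subst_var_lift d φ, subst_var_lift d ψ]
  | imp φ ψ => by simp [lift, subst, subst_var_lift d φ, subst_var_lift d ψ]
  | all φ => by
      have : Term.lift 0 (Term.var d) = Term.var (d+1) := by simp [Term.lift]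
      simp [lift, subst, this, subst_var_lift (d+1) φ]
  | ex φ => by
      have : Term.lift 0 (Term.var d) = Term.var (d+1) := by simp [Term.lift]
      simp [lift, subst, this, subst_var_lift (d+1) φ]

/-! `noDollar`, `isQF`, `alt` are stable under lift/subst/repl -/

theorem noDollar_lift (d : ℕ) : ∀ {φ : Formula}, φ.noDollar → (lift d φ).noDollar
  | falsum, h => h
  | dollar, h => h.elim
  | eq _ _, _ => trivial
  | and φ ψ, h => ⟨noDollar_lift d h.1, noDollar_lift d h.2⟩
  | or φ ψ, h => ⟨noDollar_lift d h.1, noDollar_lift d h.2⟩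
  | imp φ ψ, h => ⟨noDollar_lift d h.1, noDollar_lift d h.2⟩
  | all φ, h => noDollar_lift (d+1) h
  | ex φ, h => noDollar_lift (d+1) h

theorem noDollar_subst (k : ℕ) (s : Term) :
    ∀ {φ : Formula}, φ.noDollar → (subst k s φ).noDollar
  | falsum, h => h
  | dollar, h => h.elim
  | eq _ _, _ => trivial
  | and φ ψ, h => ⟨noDollar_subst k s h.1, noDollar_subst k s h.2⟩
  | or φ ψ, h => ⟨noDollar_subst k s h.1, noDollar_subst k s h.2⟩
  | imp φ ψ, h => ⟨noDollar_subst k s h.1, noDollar_subst k s h.2⟩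
  | all φ, h => noDollar_subst (k+1) (Term.lift 0 s) h
  | ex φ, h => noDollar_subst (k+1) (Term.lift 0 s) h

theorem isQF_lift (d : ℕ) : ∀ {φ : Formula}, φ.isQF → (lift d φ).isQF
  | falsum, h => h
  | dollar, h => h.elim
  | eq _ _, _ => trivial
  | and φ ψ, h => ⟨isQF_lift d h.1, isQF_lift d h.2⟩
  | or φ ψ, h => ⟨isQF_lift d h.1, isQF_lift d h.2⟩
  | imp φ ψ, h => ⟨isQF_lift d h.1, isQF_lift d h.2⟩

theorem alt_lift (d : ℕ) : ∀ φ : Formula, (lift d φ).alt = φ.alt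
  | falsum => rfl
  | dollar => rfl
  | eq _ _ => rfl
  | and φ ψ => by simp [lift, alt, alt_lift d φ, alt_lift d ψ]
  | or φ ψ => by simp [lift, alt, alt_lift d φ, alt_lift d ψ]
  | imp φ ψ => by simp [lift, alt, alt_lift d φ, alt_lift d ψ]
  | all φ => by simp [lift, alt, alt_lift (d+1) φ]
  | ex φ => by simp [lift, alt, alt_lift (d+1) φ]

theorem alt_subst (k : ℕ) (s : Term) : ∀ φ : Formula, (subst k s φ).alt = φ.alt
  | falsum => rfl
  | dollar => rfl
  | eq _ _ => rfl
  | and φ ψ => by simp [subst, alt, alt_subst k s φ, alt_subst k s ψ]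
  | or φ ψ => by simp [subst, alt, alt_subst k s φ, alt_subst k s ψ]
  | imp φ ψ => by simp [subst, alt, alt_subst k s φ, alt_subst k s ψ]
  | all φ => by simp [subst, alt, alt_subst (k+1) (Term.lift 0 s) φ]
  | ex φ => by simp [subst, alt, alt_subst (k+1) (Term.lift 0 s) φ]

theorem degree_lift (d : ℕ) (φ : Formula) : (lift d φ).degree = φ.degree := by
  simp [degree, alt_lift]

theorem degree_subst (k : ℕ) (s : Term) (φ : Formula) : (subst k s φ).degree = φ.degree := by
  simp [degree, alt_subst]

/-! the `$`-translation commutes with lift/subst/repl -/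

theorem dollarTr_lift (d : ℕ) : ∀ φ : Formula, (lift d φ).dollarTr = lift d φ.dollarTr
  | falsum => rfl
  | dollar => rfl
  | eq _ _ => rfl
  | and φ ψ => by simp [lift, dollarTr, dollarTr_lift d φ, dollarTr_lift d ψ]
  | or φ ψ => by simp [lift, dollarTr, negD, dollarTr_lift d φ, dollarTr_lift d ψ]
  | imp φ ψ => by simp [lift, dollarTr, dollarTr_lift d φ, dollarTr_lift d ψ]
  | all φ => by simp [lift, dollarTr, dollarTr_lift (d+1) φ]
  | ex φ => by simp [lift, dollarTr, negD, dollarTr_lift (d+1) φ]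

theorem dollarTr_subst (k : ℕ) (s : Term) :
    ∀ φ : Formula, (subst k s φ).dollarTr = subst k s φ.dollarTr
  | falsum => rfl
  | dollar => rfl
  | eq _ _ => rfl
  | and φ ψ => by simp [subst, dollarTr, dollarTr_subst k s φ, dollarTr_subst k s ψ]
  | or φ ψ => by simp [subst, dollarTr, negD, dollarTr_subst k s φ, dollarTr_subst k s ψ]
  | imp φ ψ => by simp [subst, dollarTr, dollarTr_subst k s φ, dollarTr_subst k s ψ]
  | all φ => by simp [subst, dollarTr, dollarTr_subst (k+1) (Term.lift 0 s) φ]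
  | ex φ => by simp [subst, dollarTr, negD, dollarTr_subst (k+1) (Term.lift 0 s) φ]

theorem dollarTr_repl (k : ℕ) (s : Term) :
    ∀ φ : Formula, (repl k s φ).dollarTr = repl k s φ.dollarTr
  | falsum => rfl
  | dollar => rfl
  | eq _ _ => rfl
  | and φ ψ => by simp [repl, dollarTr, dollarTr_repl k s φ, dollarTr_repl k s ψ]
  | or φ ψ => by simp [repl, dollarTr, negD, dollarTr_repl k s φ, dollarTr_repl k s ψ]
  | imp φ ψ => by simp [repl, dollarTr, dollarTr_repl k s φ, dollarTr_repl k s ψ]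
  | all φ => by simp [repl, dollarTr, dollarTr_repl (k+1) (Term.lift 0 s) φ]
  | ex φ => by simp [repl, dollarTr, negD, dollarTr_repl (k+1) (Term.lift 0 s) φ]

/-- substitution of a formula `δ` for the placeholder `$`. -/
def dsub (δ : Formula) : Formula → Formula
  | falsum => falsum
  | dollar => δ
  | eq t u => eq t u
  | and φ ψ => and (dsub δ φ) (dsub δ ψ)
  | or φ ψ => or (dsub δ φ) (dsub δ ψ)
  | imp φ ψ => imp (dsub δ φ) (dsub δ ψ)
  | all φ => all (dsub (lift 0 δ) φ)
  | ex φ => ex (dsub (lift 0 δ) φ)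

theorem dsub_noDollar : ∀ {φ : Formula} (δ : Formula), φ.noDollar → dsub δ φ = φ
  | falsum, _, _ => rfl
  | dollar, _, h => h.elim
  | eq _ _, _, _ => rfl
  | and φ ψ, δ, h => by simp [dsub, dsub_noDollar δ h.1, dsub_noDollar δ h.2]
  | or φ ψ, δ, h => by simp [dsub, dsub_noDollar δ h.1, dsub_noDollar δ h.2]
  | imp φ ψ, δ, h => by simp [dsub, dsub_noDollar δ h.1, dsub_noDollar δ h.2]
  | all φ, δ, h => by simp [dsub, dsub_noDollar (φ := φ) (lift 0 δ) h]
  | ex φ, δ, h => by simp [dsub, dsub_noDollar (φ := φ) (lift 0 δ) h]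

theorem dsub_lift (d : ℕ) : ∀ (φ δ : Formula), dsub (lift d δ) (lift d φ) = lift d (dsub δ φ)
  | falsum, _ => rfl
  | dollar, _ => rfl
  | eq _ _, _ => rfl
  | and φ ψ, δ => by simp [lift, dsub, dsub_lift d φ δ, dsub_lift d ψ δ]
  | or φ ψ, δ => by simp [lift, dsub, dsub_lift d φ δ, dsub_lift d ψ δ]
  | imp φ ψ, δ => by simp [lift, dsub, dsub_lift d φ δ, dsub_lift d ψ δ]
  | all φ, δ => by
      simp [lift, dsub, ← dsub_lift (d+1) φ (lift 0 δ), lift_lift 0 d (by omega)]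
  | ex φ, δ => by
      simp [lift, dsub, ← dsub_lift (d+1) φ (lift 0 δ), lift_lift 0 d (by omega)]

theorem dsub_subst (k : ℕ) (s : Term) :
    ∀ (φ δ : Formula), subst k s (dsub δ φ) = dsub (subst k s δ) (subst k s φ)
  | falsum, _ => rfl
  | dollar, _ => rfl
  | eq _ _, _ => rfl
  | and φ ψ, δ => by simp [subst, dsub, dsub_subst k s φ δ, dsub_subst k s ψ δ]
  | or φ ψ, δ => by simp [subst, dsub, dsub_subst k s φ δ, dsub_subst k s ψ δ]
  | imp φ ψ, δ => by simp [subst, dsub, dsub_subst k s φ δ, dsub_subst k s ψ δ]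
  | all φ, δ => by
      simp only [subst, dsub, dsub_subst (k+1) (Term.lift 0 s) φ (lift 0 δ)]
      rw [subst_lift_comm k 0 (by omega)]
  | ex φ, δ => by
      simp only [subst, dsub, dsub_subst (k+1) (Term.lift 0 s) φ (lift 0 δ)]
      rw [subst_lift_comm k 0 (by omega)]

theorem dsub_repl (k : ℕ) (s : Term) :
    ∀ (φ δ : Formula), repl k s (dsub δ φ) = dsub (repl k s δ) (repl k s φ)
  | falsum, _ => rfl
  | dollar, _ => rfl
  | eq _ _, _ => rfl
  | and φ ψ, δ => by simp [repl, dsub, dsub_repl k s φ δ, dsub_repl k s ψ δ]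
  | or φ ψ, δ => by simp [repl, dsub, dsub_repl k s φ δ, dsub_repl k s ψ δ]
  | imp φ ψ, δ => by simp [repl, dsub, dsub_repl k s φ δ, dsub_repl k s ψ δ]
  | all φ, δ => by
      simp only [repl, dsub, dsub_repl (k+1) (Term.lift 0 s) φ (lift 0 δ)]
      rw [repl_lift_comm k 0 (by omega)]
  | ex φ, δ => by
      simp only [repl, dsub, dsub_repl (k+1) (Term.lift 0 s) φ (lift 0 δ)]
      rw [repl_lift_comm k 0 (by omega)]

end Formula
/-! ### Section 3: Hilbert-style toolkit and a sequent layer -/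

section Logic
variable {T : Set Formula} {a b c φ ψ χ γ δ : Formula}

theorem proves_mono {T' : Set Formula} (hT : T ⊆ T') {φ : Formula}
    (h : Proves T φ) : Proves T' φ := by
  induction h with
  | ax h => exact .ax (hT h)
  | ha h => exact .ha h
  | mp _ _ ih1 ih2 => exact .mp ih1 ih2
  | gen _ ih => exact .gen ih

theorem thmK : Proves T (φ.imp (ψ.imp φ)) := .ha (.axK φ ψ)
theorem thmS : Proves T ((φ.imp (ψ.imp χ)).imp ((φ.imp ψ).imp (φ.imp χ))) := .ha (.axS φ ψ χ)

theorem imp_intro (h : Proves T ψ) : Proves T (φ.imp ψ) := .mp thmK h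

theorem prov_s (h1 : Proves T (φ.imp (ψ.imp χ))) (h2 : Proves T (φ.imp ψ)) :
    Proves T (φ.imp χ) := .mp (.mp thmS h1) h2

theorem imp_refl : Proves T (φ.imp φ) :=
  prov_s (thmK (ψ := φ.imp φ)) thmK

theorem imp_trans (h1 : Proves T (a.imp b)) (h2 : Proves T (b.imp c)) :
    Proves T (a.imp c) := prov_s (imp_intro h2) h1

theorem imp_mono_right_thm (h : Proves T (b.imp c)) :
    Proves T ((a.imp b).imp (a.imp c)) := .mp thmS (imp_intro h)

/-- the sequent layer: `Sq T Γ φ` means `T ⊢ Γ → φ`. -/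
def Sq (T : Set Formula) (Γ : List Formula) (φ : Formula) : Prop :=
  Proves T (Γ.foldr Formula.imp φ)

theorem Sq.ofProves {Γ : List Formula} (h : Proves T φ) : Sq T Γ φ := by
  induction Γ with
  | nil => exact h
  | cons γ Γ ih => exact imp_intro ih

theorem Sq.toProves (h : Sq T [] φ) : Proves T φ := h

theorem foldr_mp_thm {Γ : List Formula} :
    Proves T ((Γ.foldr Formula.imp (φ.imp ψ)).imp
      ((Γ.foldr Formula.imp φ).imp (Γ.foldr Formula.imp ψ))) := by
  induction Γ with
  | nil => exact imp_refl
  | cons γ Γ ih => exact imp_trans (imp_mono_right_thm ih) thmS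

theorem Sq.mp {Γ : List Formula} (h1 : Sq T Γ (φ.imp ψ)) (h2 : Sq T Γ φ) : Sq T Γ ψ :=
  Proves.mp (Proves.mp foldr_mp_thm h1) h2

theorem Sq.weak {Γ : List Formula} (h : Sq T Γ φ) : Sq T (γ :: Γ) φ := imp_intro h

theorem Sq.hyp_head {Γ : List Formula} : Sq T (φ :: Γ) φ := by
  induction Γ with
  | nil => exact imp_refl
  | cons γ Γ ih => exact imp_trans ih thmK

theorem Sq.hyp {Γ : List Formula} (h : φ ∈ Γ) : Sq T Γ φ := by
  induction Γ with
  | nil => cases h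
  | cons γ Γ ih =>
      rcases List.mem_cons.mp h with h | h
      · subst h; exact Sq.hyp_head
      · exact (ih h).weak

theorem thmC : Proves T ((a.imp (b.imp c)).imp (b.imp (a.imp c))) :=
  show Sq T [a.imp (b.imp c), b, a] c from
    Sq.mp (Sq.mp (Sq.hyp (φ := a.imp (b.imp c)) (by simp)) (Sq.hyp (φ := a) (by simp)))
      (Sq.hyp (φ := b) (by simp))

theorem rotate_thm {Γ : List Formula} :
    Proves T ((γ.imp (Γ.foldr Formula.imp φ)).imp (Γ.foldr Formula.imp (γ.imp φ))) := by
  induction Γ with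
  | nil => exact imp_refl
  | cons b Γ ih => exact imp_trans thmC (imp_mono_right_thm ih)

theorem Sq.intro {Γ : List Formula} (h : Sq T (γ :: Γ) φ) : Sq T Γ (γ.imp φ) :=
  Proves.mp rotate_thm h

theorem Sq.elim {Γ : List Formula} (h : Sq T Γ (γ.imp φ)) : Sq T (γ :: Γ) φ :=
  Sq.mp h.weak Sq.hyp_head

theorem Sq.mono {Γ Δ : List Formula} (hΓ : ∀ x ∈ Γ, x ∈ Δ) (h : Sq T Γ φ) : Sq T Δ φ := by
  have aux : ∀ Γ' : List Formula, (∀ x ∈ Γ', x ∈ Δ) →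
      Sq T Δ (Γ'.foldr Formula.imp φ) → Sq T Δ φ := by
    intro Γ'
    induction Γ' with
    | nil => exact fun _ hh => hh
    | cons γ Γ' ih =>
        intro hs hh
        exact ih (fun x hx => hs x (List.mem_cons_of_mem _ hx))
          (hh.mp (Sq.hyp (hs γ (by simp))))
  exact aux Γ hΓ (Sq.ofProves h)

end Logic
/-! ### Section 4: natural-deduction helpers, equivalence, decidability -/

section NDLayer
variable {T : Set Formula} {Γ : List Formula} {a b c d φ ψ χ γ : Formula}

theorem Sq.axThm (h : HAAx φ) : Sq T Γ φ := .ofProves (.ha h)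

theorem Sq.h0 : Sq T (φ :: Γ) φ := Sq.hyp_head
theorem Sq.h1 : Sq T (a :: φ :: Γ) φ := Sq.hyp_head.weak
theorem Sq.h2 : Sq T (a :: b :: φ :: Γ) φ := Sq.hyp_head.weak.weak
theorem Sq.h3 : Sq T (a :: b :: c :: φ :: Γ) φ := Sq.hyp_head.weak.weak.weak
theorem Sq.h4 : Sq T (a :: b :: c :: d :: φ :: Γ) φ := Sq.hyp_head.weak.weak.weak.weak

theorem Sq.andI (h1 : Sq T Γ a) (h2 : Sq T Γ b) : Sq T Γ (a.and b) :=
  ((Sq.axThm (.andI a b)).mp h1).mp h2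
theorem Sq.andE1 (h : Sq T Γ (a.and b)) : Sq T Γ a := (Sq.axThm (.andE1 a b)).mp h
theorem Sq.andE2 (h : Sq T Γ (a.and b)) : Sq T Γ b := (Sq.axThm (.andE2 a b)).mp h
theorem Sq.orI1 (h : Sq T Γ a) : Sq T Γ (a.or b) := (Sq.axThm (.orI1 a b)).mp h
theorem Sq.orI2 (h : Sq T Γ b) : Sq T Γ (a.or b) := (Sq.axThm (.orI2 a b)).mp h
theorem Sq.orE (h : Sq T Γ (a.or b)) (h1 : Sq T (a :: Γ) c) (h2 : Sq T (b :: Γ) c) :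
    Sq T Γ c := (((Sq.axThm (.orE a b c)).mp h1.intro).mp h2.intro).mp h
theorem Sq.exfalso (h : Sq T Γ Formula.falsum) : Sq T Γ φ := (Sq.axThm (.efq φ)).mp h
theorem Sq.negE (h1 : Sq T Γ a.neg) (h2 : Sq T Γ a) : Sq T Γ φ := (Sq.mp h1 h2).exfalso
theorem Sq.allE' (t : Term) (h : Sq T Γ φ.all) : Sq T Γ (φ.subst 0 t) :=
  (Sq.axThm (.allE φ t)).mp h
theorem Sq.exI' (t : Term) (h : Sq T Γ (φ.subst 0 t)) : Sq T Γ φ.ex :=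
  (Sq.axThm (.exI φ t)).mp h

theorem allI_thm {Γ : List Formula} :
    Proves T (((Γ.map (Formula.lift 0)).foldr Formula.imp φ).all.imp
      (Γ.foldr Formula.imp φ.all)) := by
  induction Γ with
  | nil => exact imp_refl
  | cons γ Γ ih =>
      show Sq T [((Formula.lift 0 γ).imp ((Γ.map (Formula.lift 0)).foldr Formula.imp φ)).all, γ]
        (Γ.foldr Formula.imp φ.all)
      have hXh := Sq.h0 (T := T)
        (φ := ((Formula.lift 0 γ).imp ((Γ.map (Formula.lift 0)).foldr Formula.imp φ)).all)
        (Γ := [γ])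
      have hγ := Sq.h1 (T := T) (φ := γ)
        (a := ((Formula.lift 0 γ).imp ((Γ.map (Formula.lift 0)).foldr Formula.imp φ)).all)
        (Γ := [])
      have h2 := (Sq.axThm (.allVac γ)).mp hγ
      have h3 := ((Sq.axThm (.allK (Formula.lift 0 γ)
        ((Γ.map (Formula.lift 0)).foldr Formula.imp φ))).mp hXh).mp h2
      exact (Sq.ofProves ih).mp h3

theorem Sq.allI (h : Sq T (Γ.map (Formula.lift 0)) φ) : Sq T Γ φ.all :=
  Proves.mp allI_thm (Proves.gen h)

theorem Sq.exE (h1 : Sq T Γ φ.ex) (h2 : Sq T (φ :: Γ.map (Formula.lift 0)) (Formula.lift 0 χ)) :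
    Sq T Γ χ :=
  have h3 : Sq T (Γ.map (Formula.lift 0)) (φ.imp (Formula.lift 0 χ)) := h2.intro
  have h4 : Sq T Γ (φ.imp (Formula.lift 0 χ)).all := Proves.mp allI_thm (Proves.gen h3)
  ((Sq.axThm (.exE φ χ)).mp h4).mp h1

theorem all_mono (h : Proves T (a.imp b)) : Proves T (a.all.imp b.all) :=
  .mp (.ha (.allK a b)) (.gen h)

theorem exI_self : Proves T (φ.imp (Formula.lift 1 φ).ex) := by
  have h := Proves.ha (T := T) (.exI (Formula.lift 1 φ) (Term.var 0))
  rwa [Formula.subst_var_lift] at h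

theorem ex_mono (h : Proves T (a.imp b)) : Proves T (a.ex.imp b.ex) := by
  have h1 : Proves T (a.imp (Formula.lift 0 b.ex)) := by
    show Proves T (a.imp (Formula.lift 1 b).ex)
    exact imp_trans h exI_self
  exact .mp (.ha (.exE a b.ex)) (.gen h1)

/-- object-level equivalence (a pair of provable implications). -/
def Eqv (T : Set Formula) (A B : Formula) : Prop :=
  Proves T (A.imp B) ∧ Proves T (B.imp A)

theorem Eqv.refl : Eqv T a a := ⟨imp_refl, imp_refl⟩
theorem Eqv.symm (h : Eqv T a b) : Eqv T b a := ⟨h.2, h.1⟩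
theorem Eqv.trans (h1 : Eqv T a b) (h2 : Eqv T b c) : Eqv T a c :=
  ⟨imp_trans h1.1 h2.1, imp_trans h2.2 h1.2⟩

theorem imp_congr_thm {a' b' : Formula} (h1 : Proves T (a'.imp a)) (h2 : Proves T (b.imp b')) :
    Proves T ((a.imp b).imp (a'.imp b')) :=
  show Sq T [a.imp b, a'] b' from
    (Sq.ofProves h2).mp (Sq.h0.mp ((Sq.ofProves h1).mp Sq.h1))

theorem Eqv.and_congr {a' b' : Formula} (h1 : Eqv T a a') (h2 : Eqv T b b') :
    Eqv T (a.and b) (a'.and b') :=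
  ⟨show Sq T [a.and b] (a'.and b') from
      Sq.andI ((Sq.ofProves h1.1).mp Sq.h0.andE1) ((Sq.ofProves h2.1).mp Sq.h0.andE2),
   show Sq T [a'.and b'] (a.and b) from
      Sq.andI ((Sq.ofProves h1.2).mp Sq.h0.andE1) ((Sq.ofProves h2.2).mp Sq.h0.andE2)⟩

theorem Eqv.or_congr {a' b' : Formula} (h1 : Eqv T a a') (h2 : Eqv T b b') :
    Eqv T (a.or b) (a'.or b') :=
  ⟨show Sq T [a.or b] (a'.or b') from
      Sq.h0.orE (Sq.orI1 ((Sq.ofProves h1.1).mp Sq.h0)) (Sq.orI2 ((Sq.ofProves h2.1).mp Sq.h0)),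
   show Sq T [a'.or b'] (a.or b) from
      Sq.h0.orE (Sq.orI1 ((Sq.ofProves h1.2).mp Sq.h0)) (Sq.orI2 ((Sq.ofProves h2.2).mp Sq.h0))⟩

theorem Eqv.imp_congr {a' b' : Formula} (h1 : Eqv T a a') (h2 : Eqv T b b') :
    Eqv T (a.imp b) (a'.imp b') :=
  ⟨imp_congr_thm h1.2 h2.1, imp_congr_thm h1.1 h2.2⟩

theorem Eqv.all_congr (h : Eqv T a b) : Eqv T a.all b.all :=
  ⟨all_mono h.1, all_mono h.2⟩
theorem Eqv.ex_congr (h : Eqv T a b) : Eqv T a.ex b.ex :=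
  ⟨ex_mono h.1, ex_mono h.2⟩

theorem Eqv.and_comm : Eqv T (a.and b) (b.and a) :=
  ⟨show Sq T [a.and b] (b.and a) from Sq.andI Sq.h0.andE2 Sq.h0.andE1,
   show Sq T [b.and a] (a.and b) from Sq.andI Sq.h0.andE2 Sq.h0.andE1⟩

theorem Eqv.or_comm : Eqv T (a.or b) (b.or a) :=
  ⟨show Sq T [a.or b] (b.or a) from Sq.h0.orE (Sq.orI2 Sq.h0) (Sq.orI1 Sq.h0),
   show Sq T [b.or a] (a.or b) from Sq.h0.orE (Sq.orI2 Sq.h0) (Sq.orI1 Sq.h0)⟩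

/-- decidability of a formula. -/
def decf (φ : Formula) : Formula := φ.or φ.neg

theorem dec_transfer (he : Eqv T a b) (h : Proves T (decf b)) : Proves T (decf a) := by
  refine Sq.toProves ((Sq.ofProves h).orE ?_ ?_)
  · exact Sq.orI1 ((Sq.ofProves he.2).mp Sq.h0)
  · exact Sq.orI2 (Sq.intro ((Sq.h1 (φ := b.neg)).mp ((Sq.ofProves he.1).mp Sq.h0)))

theorem dec_dne (h : Proves T (decf a)) : Proves T (a.neg.neg.imp a) := by
  refine Sq.toProves ((Sq.ofProves h).orE ?_ ?_)
  · exact Sq.intro Sq.h1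
  · exact Sq.intro ((Sq.h0 (φ := a.neg.neg)).negE (Sq.h1 (φ := a.neg)))

theorem dne_intro : Proves T (a.imp a.neg.neg) :=
  show Sq T [a, a.neg] Formula.falsum from (Sq.h1 (φ := a.neg)).mp (Sq.h0 (φ := a))

theorem dec_and (h1 : Proves T (decf a)) (h2 : Proves T (decf b)) :
    Proves T (decf (a.and b)) := by
  refine Sq.toProves ((Sq.ofProves h1).orE ?_ ?_)
  · refine ((Sq.ofProves h2).weak.orE ?_ ?_)
    · exact Sq.orI1 (Sq.andI Sq.h1 Sq.h0)
    · exact Sq.orI2 (Sq.intro ((Sq.h1 (φ := b.neg)).mp (Sq.h0 (φ := a.and b)).andE2))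
  · exact Sq.orI2 (Sq.intro ((Sq.h1 (φ := a.neg)).mp (Sq.h0 (φ := a.and b)).andE1))

theorem dec_or (h1 : Proves T (decf a)) (h2 : Proves T (decf b)) :
    Proves T (decf (a.or b)) := by
  refine Sq.toProves ((Sq.ofProves h1).orE ?_ ?_)
  · exact Sq.orI1 (Sq.orI1 Sq.h0)
  · refine ((Sq.ofProves h2).weak.orE ?_ ?_)
    · exact Sq.orI1 (Sq.orI2 Sq.h0)
    · refine Sq.orI2 (Sq.intro ?_)
      exact (Sq.h0 (φ := a.or b)).orE ((Sq.h3 (φ := a.neg)).mp Sq.h0)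
        ((Sq.h2 (φ := b.neg)).mp Sq.h0)

theorem dec_imp (h1 : Proves T (decf a)) (h2 : Proves T (decf b)) :
    Proves T (decf (a.imp b)) := by
  refine Sq.toProves ((Sq.ofProves h2).orE ?_ ?_)
  · exact Sq.orI1 (Sq.intro Sq.h1)
  · refine ((Sq.ofProves h1).weak.orE ?_ ?_)
    · refine Sq.orI2 (Sq.intro ?_)
      exact (Sq.h2 (φ := b.neg)).mp ((Sq.h0 (φ := a.imp b)).mp (Sq.h1 (φ := a)))
    · exact Sq.orI1 (Sq.intro (((Sq.h1 (φ := a.neg)).mp (Sq.h0 (φ := a))).exfalso))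

theorem qf_dec : ∀ {φ : Formula}, φ.isQF → Proves T (decf φ)
  | .falsum, _ => Sq.toProves (Sq.orI2 (Sq.intro Sq.h0))
  | .eq t u, _ => .ha (.atomDec t u)
  | .and φ ψ, h => dec_and (qf_dec h.1) (qf_dec h.2)
  | .or φ ψ, h => dec_or (qf_dec h.1) (qf_dec h.2)
  | .imp φ ψ, h => dec_imp (qf_dec h.1) (qf_dec h.2)

end NDLayer
/-! ### Section 5: provability is closed under lifting -/

namespace Term
theorem lift_zero (d : ℕ) : lift d zero = zero := by
  simp only [zero, lift]; congr; funext i; exact i.elim0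
theorem lift_succ (d : ℕ) (t : Term) : lift d (succ t) = succ (lift d t) := by
  simp only [succ, lift]
end Term

theorem haax_lift {φ : Formula} (d : ℕ) (h : HAAx φ) : HAAx (Formula.lift d φ) := by
  cases h with
  | axK φ ψ => exact .axK _ _
  | axS φ ψ χ => exact .axS _ _ _
  | andI φ ψ => exact .andI _ _
  | andE1 φ ψ => exact .andE1 _ _
  | andE2 φ ψ => exact .andE2 _ _
  | orI1 φ ψ => exact .orI1 _ _
  | orI2 φ ψ => exact .orI2 _ _
  | orE φ ψ χ => exact .orE _ _ _
  | efq φ => exact .efq _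
  | allE φ t =>
      show HAAx ((Formula.lift (d+1) φ).all.imp (Formula.lift d (φ.subst 0 t)))
      rw [Formula.lift_subst 0 d (by omega)]
      exact .allE _ _
  | exI φ t =>
      show HAAx ((Formula.lift d (φ.subst 0 t)).imp (Formula.lift (d+1) φ).ex)
      rw [Formula.lift_subst 0 d (by omega)]
      exact .exI _ _
  | allK φ ψ => exact .allK _ _
  | allVac φ =>
      show HAAx ((Formula.lift d φ).imp (Formula.lift (d+1) (Formula.lift 0 φ)).all
      )
      rw [Formula.lift_lift 0 d (by omega)]
      exact .allVac _
  | exE φ ψ =>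
      show HAAx (((Formula.lift (d+1) φ).imp (Formula.lift (d+1) (Formula.lift 0 ψ))).all.imp
        ((Formula.lift (d+1) φ).ex.imp (Formula.lift d ψ)))
      rw [Formula.lift_lift 0 d (by omega)]
      exact .exE _ _
  | eqRefl t => exact .eqRefl _
  | eqSubst t u φ =>
      show HAAx ((Formula.eq (Term.lift d t) (Term.lift d u)).imp
        ((Formula.lift d (φ.subst 0 t)).imp (Formula.lift d (φ.subst 0 u))))
      rw [Formula.lift_subst 0 d (by omega), Formula.lift_subst 0 d (by omega)]
      exact .eqSubst _ _ _
  | succNeZero t =>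
      show HAAx (Formula.neg (Formula.eq (Term.lift d (Term.succ t)) (Term.lift d Term.zero)))
      rw [Term.lift_zero, Term.lift_succ]
      exact .succNeZero _
  | succInj t u =>
      show HAAx ((Formula.eq (Term.lift d (Term.succ t)) (Term.lift d (Term.succ u))).imp
        (Formula.eq (Term.lift d t) (Term.lift d u)))
      rw [Term.lift_succ, Term.lift_succ]
      exact .succInj _ _
  | ind φ =>
      show HAAx ((Formula.lift d (φ.subst 0 Term.zero)).imp
        (((Formula.lift (d+1) φ).imp
          (Formula.lift (d+1) (φ.repl 0 (Term.succ (Term.var 0))))).all.imp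
          (Formula.lift (d+1) φ).all))
      rw [Formula.lift_subst 0 d (by omega), Term.lift_zero,
        Formula.lift_repl 0 (d+1) (by omega)]
      have hv : Term.lift (d+1) (Term.succ (Term.var 0)) = Term.succ (Term.var 0) := by
        rw [Term.lift_succ]
        simp [Term.lift]
      rw [hv]
      exact .ind _
  | atomDec t u => exact .atomDec _ _

theorem proves_lift {T : Set Formula} (hT : ∀ φ ∈ T, ∀ d, Formula.lift d φ ∈ T)
    {φ : Formula} (h : Proves T φ) : ∀ d, Proves T (Formula.lift d φ) := by
  induction h with
  | ax h => exact fun d => .ax (hT _ h d)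
  | ha h => exact fun d => .ha (haax_lift d h)
  | mp _ _ ih1 ih2 => exact fun d => .mp (ih1 d) (ih2 d)
  | gen _ ih => exact fun d => .gen (ih (d+1))

/-! lift-closure of the axiom sets -/

mutual
theorem IsSigma.lift : ∀ {k : ℕ} {φ : Formula}, IsSigma k φ → ∀ d, IsSigma k (Formula.lift d φ)
  | _, _, .qf h, d => .qf (Formula.isQF_lift d h)
  | _, _, .ofPi h, d => .ofPi (IsPi.lift h d)
  | _, _, .ex h, d => .ex (IsSigma.lift h (d+1))

theorem IsPi.lift : ∀ {k : ℕ} {φ : Formula}, IsPi k φ → ∀ d, IsPi k (Formula.lift d φ)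
  | _, _, .qf h, d => .qf (Formula.isQF_lift d h)
  | _, _, .ofSigma h, d => .ofSigma (IsSigma.lift h d)
  | _, _, .all h, d => .all (IsPi.lift h (d+1))
end

theorem sigLEM_lift {k : ℕ} : ∀ φ ∈ sigLEM k, ∀ d, Formula.lift d φ ∈ sigLEM k := by
  rintro _ ⟨φ, hφ, rfl⟩ d
  exact ⟨Formula.lift d φ, hφ.lift d, rfl⟩

theorem lemSet_lift : ∀ φ ∈ lemSet, ∀ d, Formula.lift d φ ∈ lemSet := by
  rintro _ ⟨φ, hφ, rfl⟩ d
  exact ⟨Formula.lift d φ, Formula.noDollar_lift d hφ, rfl⟩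


/-! ### Section 6: alternation paths, Σ/Π-degrees -/

namespace Formula

/-- length of a path, counted as a Σ-prefix requirement. -/
def slen (s : List Bool) : ℕ := s.length + (if s.head? = some false then 1 else 0)
/-- length of a path, counted as a Π-prefix requirement. -/
def plen (s : List Bool) : ℕ := s.length + (if s.head? = some true then 1 else 0)

def sdeg (φ : Formula) : ℕ := φ.alt.sup slen
def pdeg (φ : Formula) : ℕ := φ.alt.sup plen

theorem alt_nonempty : ∀ φ : Formula, φ.alt.Nonempty
  | falsum => ⟨[], by simp [alt]⟩
  | dollar => ⟨[], by simp [alt]⟩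
  | eq _ _ => ⟨[], by simp [alt]⟩
  | and φ ψ => by
      obtain ⟨s, hs⟩ := alt_nonempty φ
      exact ⟨s, by simp [alt]; exact Or.inl hs⟩
  | or φ ψ => by
      obtain ⟨s, hs⟩ := alt_nonempty φ
      exact ⟨s, by simp [alt]; exact Or.inl hs⟩
  | imp φ ψ => by
      obtain ⟨s, hs⟩ := alt_nonempty ψ
      exact ⟨s, by simp [alt]; exact Or.inr hs⟩
  | all φ => ((alt_nonempty φ).image _)
  | ex φ => ((alt_nonempty φ).image _)

theorem slen_pflip (s : List Bool) : slen (pflip s) = plen s := by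
  cases s with
  | nil => rfl
  | cons b t => cases b <;> simp [pflip, slen, plen]

theorem plen_pflip (s : List Bool) : plen (pflip s) = slen s := by
  cases s with
  | nil => rfl
  | cons b t => cases b <;> simp [pflip, slen, plen]

theorem degree_and (a b : Formula) : (a.and b).degree = max a.degree b.degree := by
  simp [degree, alt, Finset.sup_union]
theorem degree_or (a b : Formula) : (a.or b).degree = max a.degree b.degree := by
  simp [degree, alt, Finset.sup_union]
theorem degree_imp (a b : Formula) : (a.imp b).degree = max a.degree b.degree := by
  unfold degree
  rw [show (a.imp b).alt = a.alt.image pflip ∪ b.alt from rfl, Finset.sup_union,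
    Finset.sup_image]
  congr 1
  exact Finset.sup_congr rfl (fun s _ => by simp [pflip])

theorem degree_all_ge (a : Formula) : a.degree ≤ a.all.degree := by
  refine Finset.sup_le fun s hs => ?_
  have hm : (if s.head? = some false then s else false :: s) ∈ a.all.alt :=
    Finset.mem_image_of_mem _ hs
  refine le_trans ?_ (Finset.le_sup hm)
  by_cases h : s.head? = some false <;> simp [h]

theorem degree_ex_ge (a : Formula) : a.degree ≤ a.ex.degree := by
  refine Finset.sup_le fun s hs => ?_
  have hm : (if s.head? = some true then s else true :: s) ∈ a.ex.alt :=
    Finset.mem_image_of_mem _ hs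
  refine le_trans ?_ (Finset.le_sup hm)
  by_cases h : s.head? = some true <;> simp [h]

theorem one_le_degree_all (a : Formula) : 1 ≤ a.all.degree := by
  obtain ⟨s, hs⟩ := alt_nonempty a
  have hm : (if s.head? = some false then s else false :: s) ∈ a.all.alt :=
    Finset.mem_image_of_mem _ hs
  refine le_trans ?_ (Finset.le_sup hm)
  by_cases h : s.head? = some false
  · cases s with
    | nil => simp at h
    | cons b t => simp [h]
  · simp [h]

theorem degree_ex_neg_le (a : Formula) : (Formula.ex a.neg).degree ≤ a.all.degree := by
  refine Finset.sup_le fun x hx => ?_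
  rw [show (Formula.ex a.neg).alt
      = a.neg.alt.image (fun s => if s.head? = some true then s else true :: s) from rfl] at hx
  obtain ⟨s, hs, rfl⟩ := Finset.mem_image.mp hx
  rw [show a.neg.alt = a.alt.image pflip ∪ Formula.falsum.alt from rfl] at hs
  rcases Finset.mem_union.mp hs with hs | hs
  · obtain ⟨u, hu, rfl⟩ := Finset.mem_image.mp hs
    cases u with
    | nil => simpa [pflip] using one_le_degree_all a
    | cons b t =>
        have hm : (if (b :: t).head? = some false then (b :: t) else false :: b :: t)
            ∈ a.all.alt := Finset.mem_image_of_mem _ hu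
        refine le_trans ?_ (Finset.le_sup hm)
        cases b <;> simp [pflip]
  · have hx : s = [] := by simpa [alt] using hs
    subst hx
    simpa using one_le_degree_all a

/-! computation rules for `sdeg`/`pdeg` -/

theorem sdeg_prime_falsum : (falsum).sdeg = 0 := by simp [sdeg, alt, slen]
theorem sdeg_prime_eq (t u : Term) : (eq t u).sdeg = 0 := by simp [sdeg, alt, slen]
theorem pdeg_prime_falsum : (falsum).pdeg = 0 := by simp [pdeg, alt, plen]
theorem pdeg_prime_eq (t u : Term) : (eq t u).pdeg = 0 := by simp [pdeg, alt, plen]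

theorem sdeg_and (a b : Formula) : (a.and b).sdeg = max a.sdeg b.sdeg := by
  simp [sdeg, alt, Finset.sup_union]
theorem sdeg_or (a b : Formula) : (a.or b).sdeg = max a.sdeg b.sdeg := by
  simp [sdeg, alt, Finset.sup_union]
theorem pdeg_and (a b : Formula) : (a.and b).pdeg = max a.pdeg b.pdeg := by
  simp [pdeg, alt, Finset.sup_union]
theorem pdeg_or (a b : Formula) : (a.or b).pdeg = max a.pdeg b.pdeg := by
  simp [pdeg, alt, Finset.sup_union]

theorem sdeg_imp (a b : Formula) : (a.imp b).sdeg = max a.pdeg b.sdeg := by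
  unfold sdeg
  rw [show (a.imp b).alt = a.alt.image pflip ∪ b.alt from rfl, Finset.sup_union,
    Finset.sup_image]
  congr 1
  · exact Finset.sup_congr rfl (fun s _ => slen_pflip s)

theorem pdeg_imp (a b : Formula) : (a.imp b).pdeg = max a.sdeg b.pdeg := by
  unfold pdeg
  rw [show (a.imp b).alt = a.alt.image pflip ∪ b.alt from rfl, Finset.sup_union,
    Finset.sup_image]
  congr 1
  · exact Finset.sup_congr rfl (fun s _ => plen_pflip s)

theorem sdeg_ex_ge (a : Formula) : a.sdeg ≤ a.ex.sdeg := by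
  refine Finset.sup_le fun s hs => ?_
  have hm : (if s.head? = some true then s else true :: s) ∈ a.ex.alt :=
    Finset.mem_image_of_mem _ hs
  refine le_trans ?_ (Finset.le_sup hm)
  cases s with
  | nil => simp [slen]
  | cons b t => cases b <;> simp [slen]

theorem pdeg_all_ge (a : Formula) : a.pdeg ≤ a.all.pdeg := by
  refine Finset.sup_le fun s hs => ?_
  have hm : (if s.head? = some false then s else false :: s) ∈ a.all.alt :=
    Finset.mem_image_of_mem _ hs
  refine le_trans ?_ (Finset.le_sup hm)
  cases s with
  | nil => simp [plen]
  | cons b t => cases b <;> simp [plen]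

theorem mem_alt_ex_head {a : Formula} {x : List Bool} (hx : x ∈ a.ex.alt) :
    x.head? = some true := by
  obtain ⟨s, _, rfl⟩ := Finset.mem_image.mp hx
  by_cases h : s.head? = some true <;> simp [h]

theorem mem_alt_all_head {a : Formula} {x : List Bool} (hx : x ∈ a.all.alt) :
    x.head? = some false := by
  obtain ⟨s, _, rfl⟩ := Finset.mem_image.mp hx
  by_cases h : s.head? = some false <;> simp [h]

theorem slen_nil : slen ([] : List Bool) = 0 := rfl
theorem plen_nil : plen ([] : List Bool) = 0 := rfl
theorem slen_cons (b : Bool) (t : List Bool) :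
    slen (b :: t) = t.length + 1 + (if b = false then 1 else 0) := by
  cases b <;> simp [slen]
theorem plen_cons (b : Bool) (t : List Bool) :
    plen (b :: t) = t.length + 1 + (if b = true then 1 else 0) := by
  cases b <;> simp [plen]

theorem one_le_sdeg_ex (a : Formula) : 1 ≤ a.ex.sdeg := by
  obtain ⟨x, hx⟩ := alt_nonempty a.ex
  refine le_trans ?_ (Finset.le_sup hx)
  have h := mem_alt_ex_head hx
  cases x with
  | nil => simp at h
  | cons b t => rw [slen_cons]; omega

theorem one_le_pdeg_all (a : Formula) : 1 ≤ a.all.pdeg := by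
  obtain ⟨x, hx⟩ := alt_nonempty a.all
  refine le_trans ?_ (Finset.le_sup hx)
  have h := mem_alt_all_head hx
  cases x with
  | nil => simp at h
  | cons b t => rw [plen_cons]; omega

theorem sdeg_ex_le_degree (a : Formula) : a.ex.sdeg ≤ a.ex.degree := by
  refine Finset.sup_le fun x hx => ?_
  have h := mem_alt_ex_head hx
  have h2 : slen x = x.length := by simp [slen, h]
  rw [h2]
  exact Finset.le_sup hx

theorem pdeg_all_le_degree (a : Formula) : a.all.pdeg ≤ a.all.degree := by
  refine Finset.sup_le fun x hx => ?_
  have h := mem_alt_all_head hx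
  have h2 : plen x = x.length := by simp [plen, h]
  rw [h2]
  exact Finset.le_sup hx

theorem two_le_sdeg_all (a : Formula) : 2 ≤ a.all.sdeg := by
  obtain ⟨s, hs⟩ := alt_nonempty a
  have hm : (if s.head? = some false then s else false :: s) ∈ a.all.alt :=
    Finset.mem_image_of_mem _ hs
  refine le_trans ?_ (Finset.le_sup hm)
  by_cases h : s.head? = some false
  · rw [if_pos h]
    cases s with
    | nil => simp at h
    | cons b t =>
        have hb : b = false := by simpa using h
        subst hb
        rw [slen_cons]; simp only [reduceIte]; omega
  · rw [if_neg h, slen_cons]; simp only [reduceIte]; omega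

theorem two_le_pdeg_ex (a : Formula) : 2 ≤ a.ex.pdeg := by
  obtain ⟨s, hs⟩ := alt_nonempty a
  have hm : (if s.head? = some true then s else true :: s) ∈ a.ex.alt :=
    Finset.mem_image_of_mem _ hs
  refine le_trans ?_ (Finset.le_sup hm)
  by_cases h : s.head? = some true
  · rw [if_pos h]
    cases s with
    | nil => simp at h
    | cons b t =>
        have hb : b = true := by simpa using h
        subst hb
        rw [plen_cons]; simp only [reduceIte]; omega
  · rw [if_neg h, plen_cons]; simp only [reduceIte]; omega

theorem pdeg_le_of_sdeg_all {a : Formula} {j : ℕ} (h : a.all.sdeg ≤ j) : a.pdeg + 1 ≤ j := by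
  have h2 : 2 ≤ j := le_trans (two_le_sdeg_all a) h
  have hp : a.pdeg ≤ j - 1 := by
    refine Finset.sup_le fun s hs => ?_
    have hm : (if s.head? = some false then s else false :: s) ∈ a.all.alt :=
      Finset.mem_image_of_mem _ hs
    have hle : slen (if s.head? = some false then s else false :: s) ≤ j :=
      le_trans (Finset.le_sup hm) h
    by_cases hh : s.head? = some false
    · rw [if_pos hh] at hle
      cases s with
      | nil => simp at hh
      | cons b t =>
          have hb : b = false := by simpa using hh
          subst hb
          rw [slen_cons] at hle
          rw [plen_cons]
          simp at hle ⊢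
          omega
    · rw [if_neg hh, slen_cons] at hle
      cases s with
      | nil => rw [plen_nil]; omega
      | cons b t =>
          have hb : b = true := by
            cases b
            · simp at hh
            · rfl
          subst hb
          rw [plen_cons]
          simp only [List.length_cons] at hle
          simp at hle ⊢
          omega
  omega

theorem sdeg_le_of_pdeg_ex {a : Formula} {j : ℕ} (h : a.ex.pdeg ≤ j) : a.sdeg + 1 ≤ j := by
  have h2 : 2 ≤ j := le_trans (two_le_pdeg_ex a) h
  have hp : a.sdeg ≤ j - 1 := by
    refine Finset.sup_le fun s hs => ?_
    have hm : (if s.head? = some true then s else true :: s) ∈ a.ex.alt :=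
      Finset.mem_image_of_mem _ hs
    have hle : plen (if s.head? = some true then s else true :: s) ≤ j :=
      le_trans (Finset.le_sup hm) h
    by_cases hh : s.head? = some true
    · rw [if_pos hh] at hle
      cases s with
      | nil => simp at hh
      | cons b t =>
          have hb : b = true := by simpa using hh
          subst hb
          rw [plen_cons] at hle
          rw [slen_cons]
          simp at hle ⊢
          omega
    · rw [if_neg hh, plen_cons] at hle
      cases s with
      | nil => rw [slen_nil]; omega
      | cons b t =>
          have hb : b = false := by
            cases b
            · rfl
            · simp at hh
          subst hb
          rw [slen_cons]
          simp only [List.length_cons] at hle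
          simp at hle ⊢
          omega
  omega

end Formula


/-! ### Section 7: prenex classes, duals, Σ/Π-LEM and DNE -/

theorem Formula.isQF_neg {φ : Formula} (h : φ.isQF) : φ.neg.isQF := ⟨h, trivial⟩

mutual
theorem IsSigma.succ : ∀ {k : ℕ} {φ : Formula}, IsSigma k φ → IsSigma (k+1) φ
  | _, _, .qf h => .ofPi (.qf h)
  | _, _, .ofPi h => .ofPi h.succ
  | _, _, .ex h => .ex h.succ
theorem IsPi.succ : ∀ {k : ℕ} {φ : Formula}, IsPi k φ → IsPi (k+1) φ
  | _, _, .qf h => .ofSigma (.qf h)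
  | _, _, .ofSigma h => .ofSigma h.succ
  | _, _, .all h => .all h.succ
end

theorem IsSigma.mono {k n : ℕ} {φ : Formula} (h : IsSigma k φ) (hkn : k ≤ n) :
    IsSigma n φ := by
  have haux : ∀ m, IsSigma (k + m) φ := by
    intro m
    induction m with
    | zero => exact h
    | succ m ih => exact ih.succ
  obtain ⟨m, rfl⟩ := Nat.exists_eq_add_of_le hkn
  exact haux m

theorem IsPi.mono {k n : ℕ} {φ : Formula} (h : IsPi k φ) (hkn : k ≤ n) :
    IsPi n φ := by
  have haux : ∀ m, IsPi (k + m) φ := by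
    intro m
    induction m with
    | zero => exact h
    | succ m ih => exact ih.succ
  obtain ⟨m, rfl⟩ := Nat.exists_eq_add_of_le hkn
  exact haux m

theorem IsSigma.ex' {j : ℕ} {σ : Formula} (h : IsSigma j σ) (hj : 1 ≤ j) :
    IsSigma j σ.ex := by
  cases j with
  | zero => omega
  | succ m => exact .ex h

theorem IsPi.all' {j : ℕ} {π : Formula} (h : IsPi j π) (hj : 1 ≤ j) :
    IsPi j π.all := by
  cases j with
  | zero => omega
  | succ m => exact .all h

mutual
theorem IsSigma.dual : ∀ {k : ℕ} {φ : Formula}, IsSigma k φ → IsPi k φ.dual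
  | _, φ, .qf h => by
      cases φ with
      | all _ => exact h.elim
      | ex _ => exact h.elim
      | dollar => exact h.elim
      | falsum => exact .qf (Formula.isQF_neg h)
      | eq t u => exact .qf (Formula.isQF_neg h)
      | and _ _ => exact .qf (Formula.isQF_neg h)
      | or _ _ => exact .qf (Formula.isQF_neg h)
      | imp _ _ => exact .qf (Formula.isQF_neg h)
  | _, _, .ofPi h => .ofSigma h.dual
  | _, _, .ex h => .all h.dual
theorem IsPi.dual : ∀ {k : ℕ} {φ : Formula}, IsPi k φ → IsSigma k φ.dual
  | _, φ, .qf h => by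
      cases φ with
      | all _ => exact h.elim
      | ex _ => exact h.elim
      | dollar => exact h.elim
      | falsum => exact .qf (Formula.isQF_neg h)
      | eq t u => exact .qf (Formula.isQF_neg h)
      | and _ _ => exact .qf (Formula.isQF_neg h)
      | or _ _ => exact .qf (Formula.isQF_neg h)
      | imp _ _ => exact .qf (Formula.isQF_neg h)
  | _, _, .ofSigma h => .ofPi h.dual
  | _, _, .all h => .ex h.dual
end

theorem sigLEM_dec {k j : ℕ} {σ : Formula} (h : IsSigma j σ) (hj : j ≤ k) :
    Proves (sigLEM k) (decf σ) := .ax ⟨σ, h.mono hj, rfl⟩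

section DualEqv
variable {k : ℕ}

/-- `(lift 1 φ).subst 0 (var 0) = φ`, instance used repeatedly below. -/
private theorem svl (φ : Formula) : (Formula.lift 1 φ).subst 0 (Term.var 0) = φ :=
  Formula.subst_var_lift 0 φ

mutual
theorem dualEqvS : ∀ {j : ℕ} {σ : Formula}, IsSigma j σ → j ≤ k →
    Eqv (sigLEM k) σ.dual σ.neg ∧ Proves (sigLEM k) (σ.neg.neg.imp σ)
  | _, σ, .qf h, _ => by
      cases σ with
      | all _ => exact h.elim
      | ex _ => exact h.elim
      | dollar => exact h.elim
      | falsum => exact ⟨Eqv.refl, dec_dne (qf_dec h)⟩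
      | eq t u => exact ⟨Eqv.refl, dec_dne (qf_dec h)⟩
      | and _ _ => exact ⟨Eqv.refl, dec_dne (qf_dec h)⟩
      | or _ _ => exact ⟨Eqv.refl, dec_dne (qf_dec h)⟩
      | imp _ _ => exact ⟨Eqv.refl, dec_dne (qf_dec h)⟩
  | _, _, .ofPi h, hj => dualEqvP h (by omega)
  | _, _, .ex (φ := φ) h, hj => by
      have IH := dualEqvS h hj
      refine ⟨⟨?_, ?_⟩, dec_dne (sigLEM_dec (.ex h) hj)⟩
      · -- all (dual φ) → ¬ ex φ
        refine show Sq (sigLEM k) [φ.dual.all, φ.ex] Formula.falsum from ?_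
        refine Sq.exE (φ := φ) (Sq.h1 (φ := φ.ex)) ?_
        have hall : Sq (sigLEM k) [φ, Formula.lift 0 φ.dual.all, Formula.lift 0 φ.ex]
            ((Formula.lift 1 φ.dual).subst 0 (Term.var 0)) :=
          Sq.allE' (Term.var 0) (Sq.h1 (φ := (Formula.lift 1 φ.dual).all))
        rw [svl] at hall
        exact ((Sq.ofProves IH.1.1).mp hall).negE (Sq.h0 (φ := φ))
      · -- ¬ ex φ → all (dual φ)
        refine Sq.intro (show Sq (sigLEM k) [φ.ex.neg] φ.dual.all from ?_)
        refine Sq.allI ?_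
        refine (Sq.ofProves IH.1.2).mp ?_
        refine Sq.intro (show Sq (sigLEM k) [φ, Formula.lift 0 φ.ex.neg] Formula.falsum from ?_)
        refine (Sq.h1 (φ := (Formula.lift 1 φ).ex.neg)).negE ?_
        refine Sq.exI' (Term.var 0) ?_
        rw [svl]
        exact Sq.h0
theorem dualEqvP : ∀ {j : ℕ} {π : Formula}, IsPi j π → j ≤ k →
    Eqv (sigLEM k) π.dual π.neg ∧ Proves (sigLEM k) (π.neg.neg.imp π)
  | _, π, .qf h, _ => by
      cases π with
      | all _ => exact h.elim
      | ex _ => exact h.elim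
      | dollar => exact h.elim
      | falsum => exact ⟨Eqv.refl, dec_dne (qf_dec h)⟩
      | eq t u => exact ⟨Eqv.refl, dec_dne (qf_dec h)⟩
      | and _ _ => exact ⟨Eqv.refl, dec_dne (qf_dec h)⟩
      | or _ _ => exact ⟨Eqv.refl, dec_dne (qf_dec h)⟩
      | imp _ _ => exact ⟨Eqv.refl, dec_dne (qf_dec h)⟩
  | _, _, .ofSigma h, hj => dualEqvS h (by omega)
  | _, _, .all (φ := φ) h, hj => by
      have IH := dualEqvP h hj
      have dneφ : Proves (sigLEM k) (φ.neg.neg.imp φ) := IH.2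
      refine ⟨⟨?_, ?_⟩, ?_⟩
      · -- ex (dual φ) → ¬ all φ
        refine show Sq (sigLEM k) [φ.dual.ex, φ.all] Formula.falsum from ?_
        refine Sq.exE (φ := φ.dual) (Sq.h0 (φ := φ.dual.ex)) ?_
        have hall : Sq (sigLEM k) [φ.dual, Formula.lift 0 φ.dual.ex, Formula.lift 0 φ.all]
            ((Formula.lift 1 φ).subst 0 (Term.var 0)) :=
          Sq.allE' (Term.var 0) (Sq.h2 (φ := (Formula.lift 1 φ).all))
        rw [svl] at hall
        exact ((Sq.ofProves IH.1.1).mp (Sq.h0 (φ := φ.dual))).negE hall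
      · -- ¬ all φ → ex (dual φ)
        refine Sq.intro (show Sq (sigLEM k) [φ.all.neg] φ.dual.ex from ?_)
        refine ((Sq.ofProves (sigLEM_dec (.ex h.dual) hj)).orE ?_ ?_)
        · exact Sq.h0
        · -- context [(ex dual φ).neg, ¬ all φ]; derive all φ, contradiction
          refine ((Sq.h1 (φ := φ.all.neg)).negE (Sq.allI ?_)).exfalso
          -- context lifted: [lift0 (ex dual φ).neg, lift0 (all φ).neg]; goal φ
          refine (Sq.ofProves dneφ).mp ?_
          refine Sq.intro (show Sq (sigLEM k)
            [φ.neg, Formula.lift 0 φ.dual.ex.neg, Formula.lift 0 φ.all.neg]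
            Formula.falsum from ?_)
          refine (Sq.h1 (φ := (Formula.lift 1 φ.dual).ex.neg)).negE ?_
          refine Sq.exI' (Term.var 0) ?_
          rw [svl]
          exact (Sq.ofProves IH.1.2).mp (Sq.h0 (φ := φ.neg))
      · -- ¬¬ all φ → all φ
        refine Sq.intro (show Sq (sigLEM k) [φ.all.neg.neg] φ.all from ?_)
        refine Sq.allI ?_
        refine (Sq.ofProves dneφ).mp ?_
        refine Sq.intro (show Sq (sigLEM k)
          [φ.neg, Formula.lift 0 φ.all.neg.neg] Formula.falsum from ?_)
        refine (Sq.h1 (φ := (Formula.lift 0 φ.all).neg.neg)).mp ?_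
        refine Sq.intro (show Sq (sigLEM k)
          [Formula.lift 0 φ.all, φ.neg, Formula.lift 0 φ.all.neg.neg] Formula.falsum from ?_)
        have hall : Sq (sigLEM k) [Formula.lift 0 φ.all, φ.neg, Formula.lift 0 φ.all.neg.neg]
            ((Formula.lift 1 φ).subst 0 (Term.var 0)) :=
          Sq.allE' (Term.var 0) (Sq.h0 (φ := (Formula.lift 1 φ).all))
        rw [svl] at hall
        exact (Sq.h1 (φ := φ.neg)).negE hall
end

/-- LEM for `Π_j` formulas, `j ≤ k`, over `HA + Σ_k-LEM`. -/
theorem piLEM {j : ℕ} {π : Formula} (h : IsPi j π) (hj : j ≤ k) :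
    Proves (sigLEM k) (decf π) := by
  have IH := dualEqvP (k := k) h hj
  refine Sq.toProves (((Sq.ofProves (sigLEM_dec h.dual hj)).orE ?_ ?_))
  · exact Sq.orI2 ((Sq.ofProves IH.1.1).mp Sq.h0)
  · refine Sq.orI1 ?_
    refine (Sq.ofProves IH.2).mp ?_
    refine Sq.intro (show Sq (sigLEM k) [π.neg, π.dual.neg] Formula.falsum from ?_)
    exact (Sq.h1 (φ := π.dual.neg)).negE ((Sq.ofProves IH.1.2).mp Sq.h0)

theorem sigDNE {j : ℕ} {σ : Formula} (h : IsSigma j σ) (hj : j ≤ k) :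
    Proves (sigLEM k) (σ.neg.neg.imp σ) := (dualEqvS h hj).2

theorem piDNE {j : ℕ} {π : Formula} (h : IsPi j π) (hj : j ≤ k) :
    Proves (sigLEM k) (π.neg.neg.imp π) := (dualEqvP h hj).2

end DualEqv


/-! ### Section 8A: quantifier shift lemmas -/

section Shifts
variable {k : ℕ} {a b : Formula}

private theorem fsvl (φ : Formula) : (Formula.lift 1 φ).subst 0 (Term.var 0) = φ :=
  Formula.subst_var_lift 0 φ

theorem slift {φ : Formula} (h : Proves (sigLEM k) φ) (d : ℕ) :
    Proves (sigLEM k) (Formula.lift d φ) := proves_lift sigLEM_lift h d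

/-- `(∃a) ∧ b ↔ ∃(a ∧ b⁺)` -/
theorem sh_ex_and : Eqv (sigLEM k) (a.ex.and b) (Formula.ex (a.and (Formula.lift 0 b))) := by
  constructor
  · refine show Sq (sigLEM k) [a.ex.and b] (Formula.ex (a.and (Formula.lift 0 b))) from ?_
    refine Sq.exE (φ := a) (Sq.h0 (φ := a.ex.and b)).andE1 ?_
    refine Sq.exI' (Term.var 0) ?_
    rw [fsvl]
    exact Sq.andI (Sq.h0 (φ := a)) (Sq.h1 (φ := Formula.lift 0 (a.ex.and b))).andE2
  · refine show Sq (sigLEM k) [Formula.ex (a.and (Formula.lift 0 b))] (a.ex.and b) from ?_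
    refine Sq.exE (φ := a.and (Formula.lift 0 b)) Sq.h0 ?_
    show Sq (sigLEM k) _ ((Formula.lift 1 a).ex.and (Formula.lift 0 b))
    refine Sq.andI (Sq.exI' (Term.var 0) ?_) (Sq.h0 (φ := a.and (Formula.lift 0 b))).andE2
    rw [fsvl]
    exact (Sq.h0 (φ := a.and (Formula.lift 0 b))).andE1

/-- `(∀a) ∧ b ↔ ∀(a ∧ b⁺)` -/
theorem sh_all_and : Eqv (sigLEM k) (a.all.and b) (Formula.all (a.and (Formula.lift 0 b))) := by
  constructor
  · refine show Sq (sigLEM k) [a.all.and b] (Formula.all (a.and (Formula.lift 0 b))) from ?_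
    refine Sq.allI ?_
    refine Sq.andI ?_ (Sq.h0 (φ := Formula.lift 0 (a.all.and b))).andE2
    have ha := Sq.allE' (T := sigLEM k) (Γ := [Formula.lift 0 (a.all.and b)])
      (φ := Formula.lift 1 a) (Term.var 0) (Sq.h0 (φ := Formula.lift 0 (a.all.and b))).andE1
    rwa [fsvl] at ha
  · refine show Sq (sigLEM k) [Formula.all (a.and (Formula.lift 0 b))] (a.all.and b) from ?_
    refine Sq.andI (Sq.allI ?_) ?_
    · have ha := Sq.allE' (T := sigLEM k)
        (Γ := [Formula.lift 0 (Formula.all (a.and (Formula.lift 0 b)))])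
        (φ := Formula.lift 1 (a.and (Formula.lift 0 b))) (Term.var 0)
        (Sq.h0 (φ := Formula.lift 0 (Formula.all (a.and (Formula.lift 0 b)))))
      rw [fsvl] at ha
      exact ha.andE1
    · have ha := Sq.allE' (T := sigLEM k) (Γ := [Formula.all (a.and (Formula.lift 0 b))])
        (φ := a.and (Formula.lift 0 b)) Term.zero
        (Sq.h0 (φ := Formula.all (a.and (Formula.lift 0 b))))
      have e : (a.and (Formula.lift 0 b)).subst 0 Term.zero
          = (a.subst 0 Term.zero).and b := by
        show ((a.subst 0 Term.zero).and ((Formula.lift 0 b).subst 0 Term.zero)) = _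
        rw [Formula.subst_lift_self]
      rw [e] at ha
      exact ha.andE2

/-- `(∃a) ∨ b ↔ ∃(a ∨ b⁺)` -/
theorem sh_ex_or : Eqv (sigLEM k) (a.ex.or b) (Formula.ex (a.or (Formula.lift 0 b))) := by
  constructor
  · refine show Sq (sigLEM k) [a.ex.or b] (Formula.ex (a.or (Formula.lift 0 b))) from ?_
    refine (Sq.h0 (φ := a.ex.or b)).orE ?_ ?_
    · refine Sq.exE (φ := a) (Sq.h0 (φ := a.ex)) ?_
      refine Sq.exI' (Term.var 0) ?_
      rw [fsvl]
      exact Sq.orI1 (Sq.h0 (φ := a))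
    · refine Sq.exI' Term.zero ?_
      have e : (a.or (Formula.lift 0 b)).subst 0 Term.zero
          = (a.subst 0 Term.zero).or b := by
        show ((a.subst 0 Term.zero).or ((Formula.lift 0 b).subst 0 Term.zero)) = _
        rw [Formula.subst_lift_self]
      rw [e]
      exact Sq.orI2 (Sq.h0 (φ := b))
  · refine show Sq (sigLEM k) [Formula.ex (a.or (Formula.lift 0 b))] (a.ex.or b) from ?_
    refine Sq.exE (φ := a.or (Formula.lift 0 b)) Sq.h0 ?_
    show Sq (sigLEM k) _ ((Formula.lift 1 a).ex.or (Formula.lift 0 b))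
    refine (Sq.h0 (φ := a.or (Formula.lift 0 b))).orE ?_ ?_
    · refine Sq.orI1 (Sq.exI' (Term.var 0) ?_)
      rw [fsvl]
      exact Sq.h0 (φ := a)
    · exact Sq.orI2 (Sq.h0 (φ := Formula.lift 0 b))

/-- `(∀a) ∨ b ↔ ∀(a ∨ b⁺)`, needs decidability of `b` -/
theorem sh_all_or (hdec : Proves (sigLEM k) (decf b)) :
    Eqv (sigLEM k) (a.all.or b) (Formula.all (a.or (Formula.lift 0 b))) := by
  constructor
  · refine show Sq (sigLEM k) [a.all.or b] (Formula.all (a.or (Formula.lift 0 b))) from ?_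
    refine (Sq.h0 (φ := a.all.or b)).orE ?_ ?_
    · refine Sq.allI (Sq.orI1 ?_)
      have ha := Sq.allE' (T := sigLEM k)
        (Γ := [Formula.lift 0 a.all, Formula.lift 0 (a.all.or b)])
        (φ := Formula.lift 1 a) (Term.var 0) (Sq.h0 (φ := Formula.lift 0 a.all))
      rwa [fsvl] at ha
    · exact Sq.allI (Sq.orI2 (Sq.h0 (φ := Formula.lift 0 b)))
  · refine show Sq (sigLEM k)
      [Formula.all (a.or (Formula.lift 0 b))] (a.all.or b) from ?_
    refine (Sq.ofProves hdec).orE ?_ ?_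
    · exact Sq.orI2 (Sq.h0 (φ := b))
    · refine Sq.orI1 (Sq.allI ?_)
      have ha := Sq.allE' (T := sigLEM k)
        (Γ := [Formula.lift 0 b.neg, Formula.lift 0 (Formula.all (a.or (Formula.lift 0 b)))])
        (φ := Formula.lift 1 (a.or (Formula.lift 0 b))) (Term.var 0)
        (Sq.h1 (φ := Formula.lift 0 (Formula.all (a.or (Formula.lift 0 b)))))
      rw [fsvl] at ha
      refine ha.orE (Sq.h0 (φ := a)) ?_
      exact (Sq.h1 (φ := (Formula.lift 0 b).neg)).negE (Sq.h0 (φ := Formula.lift 0 b))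

/-- `(∃a) → b ↔ ∀(a → b⁺)` -/
theorem sh_exall_imp : Eqv (sigLEM k) (a.ex.imp b) (Formula.all (a.imp (Formula.lift 0 b))) := by
  constructor
  · refine show Sq (sigLEM k) [a.ex.imp b] (Formula.all (a.imp (Formula.lift 0 b))) from ?_
    refine Sq.allI ?_
    refine Sq.intro (show Sq (sigLEM k) [a, Formula.lift 0 (a.ex.imp b)]
      (Formula.lift 0 b) from ?_)
    refine (Sq.h1 (φ := Formula.lift 0 (a.ex.imp b))).mp ?_
    show Sq (sigLEM k) _ (Formula.lift 1 a).ex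
    refine Sq.exI' (Term.var 0) ?_
    rw [fsvl]
    exact Sq.h0 (φ := a)
  · refine Sq.intro (show Sq (sigLEM k)
      [a.ex, Formula.all (a.imp (Formula.lift 0 b))] b from ?_)
    refine Sq.exE (φ := a) (Sq.h0 (φ := a.ex)) ?_
    have ha := Sq.allE' (T := sigLEM k)
      (Γ := [a, Formula.lift 0 a.ex, Formula.lift 0 (Formula.all (a.imp (Formula.lift 0 b)))])
      (φ := Formula.lift 1 (a.imp (Formula.lift 0 b))) (Term.var 0)
      (Sq.h2 (φ := Formula.lift 0 (Formula.all (a.imp (Formula.lift 0 b)))))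
    rw [fsvl] at ha
    exact ha.mp (Sq.h0 (φ := a))

/-- `(∀a) → b ↔ ∃(a → b⁺)`, needs LEM for `∀a` and `¬∀a → ∃¬a` -/
theorem sh_allex_imp (hdec : Proves (sigLEM k) (decf a.all))
    (hmk : Proves (sigLEM k) (a.all.neg.imp a.neg.ex)) :
    Eqv (sigLEM k) (a.all.imp b) (Formula.ex (a.imp (Formula.lift 0 b))) := by
  constructor
  · refine Sq.intro (show Sq (sigLEM k) [a.all.imp b]
      (Formula.ex (a.imp (Formula.lift 0 b))) from ?_)
    refine (Sq.ofProves hdec).orE ?_ ?_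
    · -- [∀a, ∀a→b]
      refine Sq.exI' Term.zero ?_
      have e : (a.imp (Formula.lift 0 b)).subst 0 Term.zero
          = (a.subst 0 Term.zero).imp b := by
        show ((a.subst 0 Term.zero).imp ((Formula.lift 0 b).subst 0 Term.zero)) = _
        rw [Formula.subst_lift_self]
      rw [e]
      refine Sq.intro ?_
      exact (Sq.h2 (φ := a.all.imp b)).mp (Sq.h1 (φ := a.all))
    · -- [¬∀a, ∀a→b]
      have hex : Sq (sigLEM k) [a.all.neg, a.all.imp b] a.neg.ex :=
        (Sq.ofProves hmk).mp (Sq.h0 (φ := a.all.neg))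
      refine Sq.exE (φ := a.neg) hex ?_
      show Sq (sigLEM k) _ (Formula.lift 1 (a.imp (Formula.lift 0 b))).ex
      refine Sq.exI' (Term.var 0) ?_
      rw [fsvl]
      refine Sq.intro ?_
      exact ((Sq.h1 (φ := a.neg)).negE (Sq.h0 (φ := a))).exfalso
  · refine Sq.intro (Sq.intro (show Sq (sigLEM k)
      [a.all, Formula.ex (a.imp (Formula.lift 0 b))] b from ?_))
    refine Sq.exE (φ := a.imp (Formula.lift 0 b))
      (Sq.h1 (φ := Formula.ex (a.imp (Formula.lift 0 b)))) ?_
    have ha := Sq.allE' (T := sigLEM k)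
      (Γ := [a.imp (Formula.lift 0 b), Formula.lift 0 a.all,
        Formula.lift 0 (Formula.ex (a.imp (Formula.lift 0 b)))])
      (φ := Formula.lift 1 a) (Term.var 0)
      (Sq.h1 (φ := Formula.lift 0 a.all))
    rw [fsvl] at ha
    exact (Sq.h0 (φ := a.imp (Formula.lift 0 b))).mp ha

/-- `a → (∃b) ↔ ∃(a⁺ → b)`, needs decidability of `a` -/
theorem sh_imp_ex (hdec : Proves (sigLEM k) (decf a)) :
    Eqv (sigLEM k) (a.imp b.ex) (Formula.ex ((Formula.lift 0 a).imp b)) := by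
  constructor
  · refine Sq.intro (show Sq (sigLEM k) [a.imp b.ex]
      (Formula.ex ((Formula.lift 0 a).imp b)) from ?_)
    refine (Sq.ofProves hdec).orE ?_ ?_
    · -- [a, a→∃b]
      refine Sq.exE (φ := b) ((Sq.h1 (φ := a.imp b.ex)).mp (Sq.h0 (φ := a))) ?_
      show Sq (sigLEM k) _ (Formula.lift 1 ((Formula.lift 0 a).imp b)).ex
      refine Sq.exI' (Term.var 0) ?_
      rw [fsvl]
      exact Sq.intro (Sq.h1 (φ := b))
    · -- [¬a, a→∃b]
      refine Sq.exI' Term.zero ?_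
      have e : ((Formula.lift 0 a).imp b).subst 0 Term.zero
          = a.imp (b.subst 0 Term.zero) := by
        show (((Formula.lift 0 a).subst 0 Term.zero).imp (b.subst 0 Term.zero)) = _
        rw [Formula.subst_lift_self]
      rw [e]
      refine Sq.intro ?_
      exact ((Sq.h1 (φ := a.neg)).negE (Sq.h0 (φ := a))).exfalso
  · refine Sq.intro (Sq.intro (show Sq (sigLEM k)
      [a, Formula.ex ((Formula.lift 0 a).imp b)] b.ex from ?_))
    refine Sq.exE (φ := (Formula.lift 0 a).imp b)
      (Sq.h1 (φ := Formula.ex ((Formula.lift 0 a).imp b))) ?_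
    show Sq (sigLEM k) _ (Formula.lift 1 b).ex
    refine Sq.exI' (Term.var 0) ?_
    rw [fsvl]
    exact (Sq.h0 (φ := (Formula.lift 0 a).imp b)).mp (Sq.h1 (φ := Formula.lift 0 a))

/-- `a → (∀b) ↔ ∀(a⁺ → b)` -/
theorem sh_imp_all : Eqv (sigLEM k) (a.imp b.all) (Formula.all ((Formula.lift 0 a).imp b)) := by
  constructor
  · refine show Sq (sigLEM k) [a.imp b.all] (Formula.all ((Formula.lift 0 a).imp b)) from ?_
    refine Sq.allI ?_
    refine Sq.intro (show Sq (sigLEM k)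
      [Formula.lift 0 a, Formula.lift 0 (a.imp b.all)] b from ?_)
    have hb : Sq (sigLEM k) [Formula.lift 0 a, Formula.lift 0 (a.imp b.all)]
        (Formula.lift 1 b).all :=
      (Sq.h1 (φ := Formula.lift 0 (a.imp b.all))).mp (Sq.h0 (φ := Formula.lift 0 a))
    have ha := Sq.allE' (Term.var 0) hb
    rwa [fsvl] at ha
  · refine Sq.intro (Sq.intro (show Sq (sigLEM k)
      [a, Formula.all ((Formula.lift 0 a).imp b)] b.all from ?_))
    refine Sq.allI ?_
    have ha := Sq.allE' (T := sigLEM k)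
      (Γ := [Formula.lift 0 a, Formula.lift 0 (Formula.all ((Formula.lift 0 a).imp b))])
      (φ := Formula.lift 1 ((Formula.lift 0 a).imp b)) (Term.var 0)
      (Sq.h1 (φ := Formula.lift 0 (Formula.all ((Formula.lift 0 a).imp b))))
    rw [fsvl] at ha
    exact ha.mp (Sq.h0 (φ := Formula.lift 0 a))

end Shifts


/-! ### Section 8B: prenex merging -/

/-- base of the `Σ_j` hierarchy: quantifier-free, or `Π_{j-1}` (when `j ≥ 1`). -/
def SBase (j : ℕ) (σ : Formula) : Prop := σ.isQF ∨ (IsPi (j-1) σ ∧ 1 ≤ j)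
/-- base of the `Π_j` hierarchy. -/
def PBase (j : ℕ) (π : Formula) : Prop := π.isQF ∨ (IsSigma (j-1) π ∧ 1 ≤ j)

theorem SBase.lift {j : ℕ} {σ : Formula} (h : SBase j σ) (d : ℕ) :
    SBase j (Formula.lift d σ) :=
  h.imp (Formula.isQF_lift d) (fun ⟨h1, h2⟩ => ⟨h1.lift d, h2⟩)

theorem PBase.lift {j : ℕ} {π : Formula} (h : PBase j π) (d : ℕ) :
    PBase j (Formula.lift d π) :=
  h.imp (Formula.isQF_lift d) (fun ⟨h1, h2⟩ => ⟨h1.lift d, h2⟩)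

theorem ofPi'' {j : ℕ} {ρ : Formula} (h : IsPi (j-1) ρ) (hj : 1 ≤ j) : IsSigma j ρ := by
  cases j with
  | zero => omega
  | succ m => exact .ofPi (by simpa using h)

theorem ofSigma'' {j : ℕ} {ρ : Formula} (h : IsSigma (j-1) ρ) (hj : 1 ≤ j) : IsPi j ρ := by
  cases j with
  | zero => omega
  | succ m => exact .ofSigma (by simpa using h)

theorem SBase.isSigma {j : ℕ} {σ : Formula} (h : SBase j σ) : IsSigma j σ := by
  rcases h with h | ⟨h, hj⟩
  · exact (IsSigma.qf h).mono (Nat.zero_le j)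
  · exact ofPi'' h hj

theorem PBase.isPi {j : ℕ} {π : Formula} (h : PBase j π) : IsPi j π := by
  rcases h with h | ⟨h, hj⟩
  · exact (IsPi.qf h).mono (Nat.zero_le j)
  · exact ofSigma'' h hj

theorem SBase.dec {k j : ℕ} {σ : Formula} (h : SBase j σ) (hjk : j ≤ k) :
    Proves (sigLEM k) (decf σ) := by
  rcases h with h | ⟨h, hj⟩
  · exact qf_dec h
  · exact piLEM h (by omega)

theorem PBase.dec {k j : ℕ} {π : Formula} (h : PBase j π) (hjk : j ≤ k) :
    Proves (sigLEM k) (decf π) := by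
  rcases h with h | ⟨h, hj⟩
  · exact qf_dec h
  · exact sigLEM_dec h (by omega)

theorem sigma_cases {j : ℕ} {σ : Formula} (h : IsSigma j σ) :
    SBase j σ ∨ ∃ b, σ = b.ex ∧ IsSigma j b ∧ 1 ≤ j := by
  cases h with
  | qf h => exact .inl (.inl h)
  | ofPi h => exact .inl (.inr ⟨by simpa using h, by omega⟩)
  | ex h => exact .inr ⟨_, rfl, h, by omega⟩

theorem pi_cases {j : ℕ} {π : Formula} (h : IsPi j π) :
    PBase j π ∨ ∃ b, π = b.all ∧ IsPi j b ∧ 1 ≤ j := by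
  cases h with
  | qf h => exact .inl (.inl h)
  | ofSigma h => exact .inl (.inr ⟨by simpa using h, by omega⟩)
  | all h => exact .inr ⟨_, rfl, h, by omega⟩

/-- the base-level (already merged) statements, used as `low` at level `j - 1`. -/
def MSand (k j : ℕ) : Prop := ∀ σ τ, IsSigma j σ → IsSigma j τ →
  ∃ ρ, IsSigma j ρ ∧ Eqv (sigLEM k) ρ (σ.and τ)
def MSor (k j : ℕ) : Prop := ∀ σ τ, IsSigma j σ → IsSigma j τ →
  ∃ ρ, IsSigma j ρ ∧ Eqv (sigLEM k) ρ (σ.or τ)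
def MPand (k j : ℕ) : Prop := ∀ π τ, IsPi j π → IsPi j τ →
  ∃ ρ, IsPi j ρ ∧ Eqv (sigLEM k) ρ (π.and τ)
def MPor (k j : ℕ) : Prop := ∀ π τ, IsPi j π → IsPi j τ →
  ∃ ρ, IsPi j ρ ∧ Eqv (sigLEM k) ρ (π.or τ)
def MSimp (k j : ℕ) : Prop := ∀ π σ, IsPi j π → IsSigma j σ →
  ∃ ρ, IsSigma j ρ ∧ Eqv (sigLEM k) ρ (π.imp σ)
def MPimp (k j : ℕ) : Prop := ∀ σ π, IsSigma j σ → IsPi j π →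
  ∃ ρ, IsPi j ρ ∧ Eqv (sigLEM k) ρ (σ.imp π)

/-! ### Section 8C: the merge constructions -/

theorem sig0_qf {σ : Formula} (h : IsSigma 0 σ) : σ.isQF := by cases h with | qf h => exact h
theorem pi0_qf {π : Formula} (h : IsPi 0 π) : π.isQF := by cases h with | qf h => exact h

theorem sigAndR (k j : ℕ) (hjk : j ≤ k) (low : MPand k (j-1)) (τ σ : Formula)
    (hτ : IsSigma j τ) (hσ : SBase j σ) :
    ∃ ρ, IsSigma j ρ ∧ Eqv (sigLEM k) ρ (σ.and τ) := by
  rcases sigma_cases hτ with hbase | ⟨b, rfl, hb, hj1⟩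
  · rcases hσ with hq | ⟨hπ, hj1⟩
    · rcases hbase with hq' | ⟨hπ', hj1'⟩
      · exact ⟨σ.and τ, (IsSigma.qf (φ := σ.and τ) ⟨hq, hq'⟩).mono (Nat.zero_le j), Eqv.refl⟩
      · obtain ⟨ρ, hρ, he⟩ := low σ τ ((IsPi.qf hq).mono (Nat.zero_le _)) hπ'
        exact ⟨ρ, ofPi'' hρ hj1', he⟩
    · have hτ' : IsPi (j-1) τ := by
        rcases hbase with hq' | ⟨hπ', _⟩
        · exact (IsPi.qf hq').mono (Nat.zero_le _)
        · exact hπ'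
      obtain ⟨ρ, hρ, he⟩ := low σ τ hπ hτ'
      exact ⟨ρ, ofPi'' hρ hj1, he⟩
  · obtain ⟨ρ', hρ', he'⟩ := sigAndR k j hjk low b (Formula.lift 0 σ) hb (hσ.lift 0)
    refine ⟨ρ'.ex, hρ'.ex' hj1, ?_⟩
    have e3 : Eqv (sigLEM k) (b.ex.and σ) (Formula.ex (b.and (Formula.lift 0 σ))) := sh_ex_and
    exact (he'.ex_congr.trans (Eqv.and_comm.ex_congr)).trans (e3.symm.trans Eqv.and_comm)
termination_by sizeOf τ

theorem sigAnd (k j : ℕ) (hjk : j ≤ k) (low : MPand k (j-1)) (σ τ : Formula)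
    (hσ : IsSigma j σ) (hτ : IsSigma j τ) :
    ∃ ρ, IsSigma j ρ ∧ Eqv (sigLEM k) ρ (σ.and τ) := by
  rcases sigma_cases hσ with hbase | ⟨a, rfl, ha, hj1⟩
  · exact sigAndR k j hjk low τ σ hτ hbase
  · obtain ⟨ρ', hρ', he'⟩ := sigAnd k j hjk low a (Formula.lift 0 τ) ha (hτ.lift 0)
    exact ⟨ρ'.ex, hρ'.ex' hj1, he'.ex_congr.trans sh_ex_and.symm⟩
termination_by sizeOf σ

theorem sigOrR (k j : ℕ) (hjk : j ≤ k) (low : MPor k (j-1)) (τ σ : Formula)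
    (hτ : IsSigma j τ) (hσ : SBase j σ) :
    ∃ ρ, IsSigma j ρ ∧ Eqv (sigLEM k) ρ (σ.or τ) := by
  rcases sigma_cases hτ with hbase | ⟨b, rfl, hb, hj1⟩
  · rcases hσ with hq | ⟨hπ, hj1⟩
    · rcases hbase with hq' | ⟨hπ', hj1'⟩
      · exact ⟨σ.or τ, (IsSigma.qf (φ := σ.or τ) ⟨hq, hq'⟩).mono (Nat.zero_le j), Eqv.refl⟩
      · obtain ⟨ρ, hρ, he⟩ := low σ τ ((IsPi.qf hq).mono (Nat.zero_le _)) hπ'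
        exact ⟨ρ, ofPi'' hρ hj1', he⟩
    · have hτ' : IsPi (j-1) τ := by
        rcases hbase with hq' | ⟨hπ', _⟩
        · exact (IsPi.qf hq').mono (Nat.zero_le _)
        · exact hπ'
      obtain ⟨ρ, hρ, he⟩ := low σ τ hπ hτ'
      exact ⟨ρ, ofPi'' hρ hj1, he⟩
  · obtain ⟨ρ', hρ', he'⟩ := sigOrR k j hjk low b (Formula.lift 0 σ) hb (hσ.lift 0)
    refine ⟨ρ'.ex, hρ'.ex' hj1, ?_⟩
    have e3 : Eqv (sigLEM k) (b.ex.or σ) (Formula.ex (b.or (Formula.lift 0 σ))) := sh_ex_or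
    exact (he'.ex_congr.trans (Eqv.or_comm.ex_congr)).trans (e3.symm.trans Eqv.or_comm)
termination_by sizeOf τ

theorem sigOr (k j : ℕ) (hjk : j ≤ k) (low : MPor k (j-1)) (σ τ : Formula)
    (hσ : IsSigma j σ) (hτ : IsSigma j τ) :
    ∃ ρ, IsSigma j ρ ∧ Eqv (sigLEM k) ρ (σ.or τ) := by
  rcases sigma_cases hσ with hbase | ⟨a, rfl, ha, hj1⟩
  · exact sigOrR k j hjk low τ σ hτ hbase
  · obtain ⟨ρ', hρ', he'⟩ := sigOr k j hjk low a (Formula.lift 0 τ) ha (hτ.lift 0)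
    exact ⟨ρ'.ex, hρ'.ex' hj1, he'.ex_congr.trans sh_ex_or.symm⟩
termination_by sizeOf σ

theorem piAndR (k j : ℕ) (hjk : j ≤ k) (low : MSand k (j-1)) (τ π : Formula)
    (hτ : IsPi j τ) (hπ : PBase j π) :
    ∃ ρ, IsPi j ρ ∧ Eqv (sigLEM k) ρ (π.and τ) := by
  rcases pi_cases hτ with hbase | ⟨b, rfl, hb, hj1⟩
  · rcases hπ with hq | ⟨hs, hj1⟩
    · rcases hbase with hq' | ⟨hs', hj1'⟩
      · exact ⟨π.and τ, (IsPi.qf (φ := π.and τ) ⟨hq, hq'⟩).mono (Nat.zero_le j), Eqv.refl⟩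
      · obtain ⟨ρ, hρ, he⟩ := low π τ ((IsSigma.qf hq).mono (Nat.zero_le _)) hs'
        exact ⟨ρ, ofSigma'' hρ hj1', he⟩
    · have hτ' : IsSigma (j-1) τ := by
        rcases hbase with hq' | ⟨hs', _⟩
        · exact (IsSigma.qf hq').mono (Nat.zero_le _)
        · exact hs'
      obtain ⟨ρ, hρ, he⟩ := low π τ hs hτ'
      exact ⟨ρ, ofSigma'' hρ hj1, he⟩
  · obtain ⟨ρ', hρ', he'⟩ := piAndR k j hjk low b (Formula.lift 0 π) hb (hπ.lift 0)
    refine ⟨ρ'.all, hρ'.all' hj1, ?_⟩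
    have e3 : Eqv (sigLEM k) (b.all.and π) (Formula.all (b.and (Formula.lift 0 π))) :=
      sh_all_and
    exact (he'.all_congr.trans (Eqv.and_comm.all_congr)).trans (e3.symm.trans Eqv.and_comm)
termination_by sizeOf τ

theorem piAnd (k j : ℕ) (hjk : j ≤ k) (low : MSand k (j-1)) (π τ : Formula)
    (hπ : IsPi j π) (hτ : IsPi j τ) :
    ∃ ρ, IsPi j ρ ∧ Eqv (sigLEM k) ρ (π.and τ) := by
  rcases pi_cases hπ with hbase | ⟨a, rfl, ha, hj1⟩
  · exact piAndR k j hjk low τ π hτ hbase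
  · obtain ⟨ρ', hρ', he'⟩ := piAnd k j hjk low a (Formula.lift 0 τ) ha (hτ.lift 0)
    exact ⟨ρ'.all, hρ'.all' hj1, he'.all_congr.trans sh_all_and.symm⟩
termination_by sizeOf π

theorem piOrR (k j : ℕ) (hjk : j ≤ k) (low : MSor k (j-1)) (τ π : Formula)
    (hτ : IsPi j τ) (hπ : PBase j π) :
    ∃ ρ, IsPi j ρ ∧ Eqv (sigLEM k) ρ (π.or τ) := by
  rcases pi_cases hτ with hbase | ⟨b, rfl, hb, hj1⟩
  · rcases hπ with hq | ⟨hs, hj1⟩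
    · rcases hbase with hq' | ⟨hs', hj1'⟩
      · exact ⟨π.or τ, (IsPi.qf (φ := π.or τ) ⟨hq, hq'⟩).mono (Nat.zero_le j), Eqv.refl⟩
      · obtain ⟨ρ, hρ, he⟩ := low π τ ((IsSigma.qf hq).mono (Nat.zero_le _)) hs'
        exact ⟨ρ, ofSigma'' hρ hj1', he⟩
    · have hτ' : IsSigma (j-1) τ := by
        rcases hbase with hq' | ⟨hs', _⟩
        · exact (IsSigma.qf hq').mono (Nat.zero_le _)
        · exact hs'
      obtain ⟨ρ, hρ, he⟩ := low π τ hs hτ'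
      exact ⟨ρ, ofSigma'' hρ hj1, he⟩
  · obtain ⟨ρ', hρ', he'⟩ := piOrR k j hjk low b (Formula.lift 0 π) hb (hπ.lift 0)
    refine ⟨ρ'.all, hρ'.all' hj1, ?_⟩
    have e3 : Eqv (sigLEM k) (b.all.or π) (Formula.all (b.or (Formula.lift 0 π))) :=
      sh_all_or (hπ.dec hjk)
    exact (he'.all_congr.trans (Eqv.or_comm.all_congr)).trans (e3.symm.trans Eqv.or_comm)
termination_by sizeOf τ

theorem piOr (k j : ℕ) (hjk : j ≤ k) (low : MSor k (j-1)) (π τ : Formula)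
    (hπ : IsPi j π) (hτ : IsPi j τ) :
    ∃ ρ, IsPi j ρ ∧ Eqv (sigLEM k) ρ (π.or τ) := by
  rcases pi_cases hπ with hbase | ⟨a, rfl, ha, hj1⟩
  · exact piOrR k j hjk low τ π hτ hbase
  · obtain ⟨ρ', hρ', he'⟩ := piOr k j hjk low a (Formula.lift 0 τ) ha (hτ.lift 0)
    exact ⟨ρ'.all, hρ'.all' hj1, he'.all_congr.trans (sh_all_or (piLEM hτ hjk)).symm⟩
termination_by sizeOf π

theorem sigImpR (k j : ℕ) (hjk : j ≤ k) (low : MPimp k (j-1)) (σ π : Formula)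
    (hσ : IsSigma j σ) (hπ : PBase j π) :
    ∃ ρ, IsSigma j ρ ∧ Eqv (sigLEM k) ρ (π.imp σ) := by
  rcases sigma_cases hσ with hbase | ⟨b, rfl, hb, hj1⟩
  · rcases hπ with hq | ⟨hs, hj1⟩
    · rcases hbase with hq' | ⟨hπ', hj1'⟩
      · exact ⟨π.imp σ, (IsSigma.qf (φ := π.imp σ) ⟨hq, hq'⟩).mono (Nat.zero_le j), Eqv.refl⟩
      · obtain ⟨ρ, hρ, he⟩ := low π σ ((IsSigma.qf hq).mono (Nat.zero_le _)) hπ'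
        exact ⟨ρ, ofPi'' hρ hj1', he⟩
    · have hσ' : IsPi (j-1) σ := by
        rcases hbase with hq' | ⟨hπ', _⟩
        · exact (IsPi.qf hq').mono (Nat.zero_le _)
        · exact hπ'
      obtain ⟨ρ, hρ, he⟩ := low π σ hs hσ'
      exact ⟨ρ, ofPi'' hρ hj1, he⟩
  · obtain ⟨ρ', hρ', he'⟩ := sigImpR k j hjk low b (Formula.lift 0 π) hb (hπ.lift 0)
    refine ⟨ρ'.ex, hρ'.ex' hj1, ?_⟩
    exact he'.ex_congr.trans (sh_imp_ex (hπ.dec hjk)).symm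
termination_by sizeOf σ

theorem sigImp (k j : ℕ) (hjk : j ≤ k) (low : MPimp k (j-1)) (π σ : Formula)
    (hπ : IsPi j π) (hσ : IsSigma j σ) :
    ∃ ρ, IsSigma j ρ ∧ Eqv (sigLEM k) ρ (π.imp σ) := by
  rcases pi_cases hπ with hbase | ⟨a, rfl, ha, hj1⟩
  · exact sigImpR k j hjk low σ π hσ hbase
  · have hall : IsPi j a.all := ha.all' hj1
    have hdec := piLEM hall hjk
    have hda := dualEqvP (k := k) hall hjk
    have hda' := dualEqvP (k := k) ha hjk
    have hmk : Proves (sigLEM k) (a.all.neg.imp a.neg.ex) :=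
      imp_trans hda.1.2 (ex_mono hda'.1.1)
    obtain ⟨ρ', hρ', he'⟩ := sigImp k j hjk low a (Formula.lift 0 σ) ha (hσ.lift 0)
    exact ⟨ρ'.ex, hρ'.ex' hj1, he'.ex_congr.trans (sh_allex_imp hdec hmk).symm⟩
termination_by sizeOf π

theorem piImpR (k j : ℕ) (hjk : j ≤ k) (low : MSimp k (j-1)) (π σ : Formula)
    (hπ : IsPi j π) (hσ : SBase j σ) :
    ∃ ρ, IsPi j ρ ∧ Eqv (sigLEM k) ρ (σ.imp π) := by
  rcases pi_cases hπ with hbase | ⟨b, rfl, hb, hj1⟩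
  · rcases hσ with hq | ⟨hp, hj1⟩
    · rcases hbase with hq' | ⟨hs', hj1'⟩
      · exact ⟨σ.imp π, (IsPi.qf (φ := σ.imp π) ⟨hq, hq'⟩).mono (Nat.zero_le j), Eqv.refl⟩
      · obtain ⟨ρ, hρ, he⟩ := low σ π ((IsPi.qf hq).mono (Nat.zero_le _)) hs'
        exact ⟨ρ, ofSigma'' hρ hj1', he⟩
    · have hπ' : IsSigma (j-1) π := by
        rcases hbase with hq' | ⟨hs', _⟩
        · exact (IsSigma.qf hq').mono (Nat.zero_le _)
        · exact hs'
      obtain ⟨ρ, hρ, he⟩ := low σ π hp hπ'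
      exact ⟨ρ, ofSigma'' hρ hj1, he⟩
  · obtain ⟨ρ', hρ', he'⟩ := piImpR k j hjk low b (Formula.lift 0 σ) hb (hσ.lift 0)
    refine ⟨ρ'.all, hρ'.all' hj1, ?_⟩
    exact he'.all_congr.trans sh_imp_all.symm
termination_by sizeOf π

theorem piImp (k j : ℕ) (hjk : j ≤ k) (low : MSimp k (j-1)) (σ π : Formula)
    (hσ : IsSigma j σ) (hπ : IsPi j π) :
    ∃ ρ, IsPi j ρ ∧ Eqv (sigLEM k) ρ (σ.imp π) := by
  rcases sigma_cases hσ with hbase | ⟨a, rfl, ha, hj1⟩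
  · exact piImpR k j hjk low π σ hπ hbase
  · obtain ⟨ρ', hρ', he'⟩ := piImp k j hjk low a (Formula.lift 0 π) ha (hπ.lift 0)
    exact ⟨ρ'.all, hρ'.all' hj1, he'.all_congr.trans sh_exall_imp.symm⟩
termination_by sizeOf σ

/-- all six merges, at every level `j ≤ k`. -/
theorem mergePack (k : ℕ) : ∀ j, j ≤ k →
    MSand k j ∧ MSor k j ∧ MPand k j ∧ MPor k j ∧ MSimp k j ∧ MPimp k j := by
  intro j
  induction j with
  | zero =>
      intro hk
      have mpand0 : MPand k 0 := fun π τ hπ hτ =>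
        ⟨π.and τ, .qf ⟨pi0_qf hπ, pi0_qf hτ⟩, Eqv.refl⟩
      have mpor0 : MPor k 0 := fun π τ hπ hτ =>
        ⟨π.or τ, .qf ⟨pi0_qf hπ, pi0_qf hτ⟩, Eqv.refl⟩
      have msand0 : MSand k 0 := fun σ τ hσ hτ =>
        ⟨σ.and τ, .qf ⟨sig0_qf hσ, sig0_qf hτ⟩, Eqv.refl⟩
      have msor0 : MSor k 0 := fun σ τ hσ hτ =>
        ⟨σ.or τ, .qf ⟨sig0_qf hσ, sig0_qf hτ⟩, Eqv.refl⟩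
      have msimp0 : MSimp k 0 := fun π σ hπ hσ =>
        ⟨π.imp σ, .qf ⟨pi0_qf hπ, sig0_qf hσ⟩, Eqv.refl⟩
      have mpimp0 : MPimp k 0 := fun σ π hσ hπ =>
        ⟨σ.imp π, .qf ⟨sig0_qf hσ, pi0_qf hπ⟩, Eqv.refl⟩
      exact ⟨msand0, msor0, mpand0, mpor0, msimp0, mpimp0⟩
  | succ m ih =>
      intro hk
      have hm := ih (by omega)
      refine ⟨sigAnd k (m+1) hk hm.2.2.1, sigOr k (m+1) hk hm.2.2.2.1,
        piAnd k (m+1) hk hm.1, piOr k (m+1) hk hm.2.1,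
        sigImp k (m+1) hk hm.2.2.2.2.2, piImp k (m+1) hk hm.2.2.2.2.1⟩


/-! ### Section 8D: prenex normal forms and `F_k`-LEM -/

mutual
theorem PS : ∀ (φ : Formula), φ.noDollar → ∀ k : ℕ, φ.sdeg ≤ k →
    ∃ σ, IsSigma φ.sdeg σ ∧ Eqv (sigLEM k) φ σ
  | .falsum, _, k, _ => ⟨.falsum, by rw [Formula.sdeg_prime_falsum]; exact .qf trivial, Eqv.refl⟩
  | .dollar, h, _, _ => h.elim
  | .eq t u, _, k, _ => ⟨.eq t u, by rw [Formula.sdeg_prime_eq]; exact .qf trivial, Eqv.refl⟩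
  | .and φ ψ, h, k, hk => by
      have hφ : φ.sdeg ≤ (φ.and ψ).sdeg := by rw [Formula.sdeg_and]; omega
      have hψ : ψ.sdeg ≤ (φ.and ψ).sdeg := by rw [Formula.sdeg_and]; omega
      obtain ⟨σ1, hσ1, he1⟩ := PS φ h.1 k (le_trans hφ hk)
      obtain ⟨σ2, hσ2, he2⟩ := PS ψ h.2 k (le_trans hψ hk)
      obtain ⟨ρ, hρ, he⟩ := (mergePack k ((φ.and ψ).sdeg) hk).1 σ1 σ2
        (hσ1.mono hφ) (hσ2.mono hψ)
      exact ⟨ρ, hρ, (he1.and_congr he2).trans he.symm⟩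
  | .or φ ψ, h, k, hk => by
      have hφ : φ.sdeg ≤ (φ.or ψ).sdeg := by rw [Formula.sdeg_or]; omega
      have hψ : ψ.sdeg ≤ (φ.or ψ).sdeg := by rw [Formula.sdeg_or]; omega
      obtain ⟨σ1, hσ1, he1⟩ := PS φ h.1 k (le_trans hφ hk)
      obtain ⟨σ2, hσ2, he2⟩ := PS ψ h.2 k (le_trans hψ hk)
      obtain ⟨ρ, hρ, he⟩ := (mergePack k ((φ.or ψ).sdeg) hk).2.1 σ1 σ2
        (hσ1.mono hφ) (hσ2.mono hψ)
      exact ⟨ρ, hρ, (he1.or_congr he2).trans he.symm⟩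
  | .imp φ ψ, h, k, hk => by
      have hφ : φ.pdeg ≤ (φ.imp ψ).sdeg := by rw [Formula.sdeg_imp]; omega
      have hψ : ψ.sdeg ≤ (φ.imp ψ).sdeg := by rw [Formula.sdeg_imp]; omega
      obtain ⟨π1, hπ1, he1⟩ := PP φ h.1 k (le_trans hφ hk)
      obtain ⟨σ2, hσ2, he2⟩ := PS ψ h.2 k (le_trans hψ hk)
      obtain ⟨ρ, hρ, he⟩ := (mergePack k ((φ.imp ψ).sdeg) hk).2.2.2.2.1 π1 σ2
        (hπ1.mono hφ) (hσ2.mono hψ)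
      exact ⟨ρ, hρ, (he1.imp_congr he2).trans he.symm⟩
  | .ex φ, h, k, hk => by
      have hφ : φ.sdeg ≤ φ.ex.sdeg := Formula.sdeg_ex_ge φ
      have h1 : 1 ≤ φ.ex.sdeg := Formula.one_le_sdeg_ex φ
      obtain ⟨σ, hσ, he⟩ := PS φ h k (le_trans hφ hk)
      exact ⟨σ.ex, (hσ.mono hφ).ex' h1, he.ex_congr⟩
  | .all φ, h, k, hk => by
      have hp : φ.pdeg + 1 ≤ φ.all.sdeg := Formula.pdeg_le_of_sdeg_all (le_refl _)
      have h2 : 2 ≤ φ.all.sdeg := Formula.two_le_sdeg_all φ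
      obtain ⟨π, hπ, he⟩ := PP φ h k (by omega)
      refine ⟨π.all, ?_, he.all_congr⟩
      have hπ' : IsPi (φ.all.sdeg - 1) π := hπ.mono (by omega)
      exact ofPi'' (hπ'.all' (by omega)) (by omega)

theorem PP : ∀ (φ : Formula), φ.noDollar → ∀ k : ℕ, φ.pdeg ≤ k →
    ∃ π, IsPi φ.pdeg π ∧ Eqv (sigLEM k) φ π
  | .falsum, _, k, _ => ⟨.falsum, by rw [Formula.pdeg_prime_falsum]; exact .qf trivial, Eqv.refl⟩
  | .dollar, h, _, _ => h.elim
  | .eq t u, _, k, _ => ⟨.eq t u, by rw [Formula.pdeg_prime_eq]; exact .qf trivial, Eqv.refl⟩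
  | .and φ ψ, h, k, hk => by
      have hφ : φ.pdeg ≤ (φ.and ψ).pdeg := by rw [Formula.pdeg_and]; omega
      have hψ : ψ.pdeg ≤ (φ.and ψ).pdeg := by rw [Formula.pdeg_and]; omega
      obtain ⟨π1, hπ1, he1⟩ := PP φ h.1 k (le_trans hφ hk)
      obtain ⟨π2, hπ2, he2⟩ := PP ψ h.2 k (le_trans hψ hk)
      obtain ⟨ρ, hρ, he⟩ := (mergePack k ((φ.and ψ).pdeg) hk).2.2.1 π1 π2
        (hπ1.mono hφ) (hπ2.mono hψ)
      exact ⟨ρ, hρ, (he1.and_congr he2).trans he.symm⟩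
  | .or φ ψ, h, k, hk => by
      have hφ : φ.pdeg ≤ (φ.or ψ).pdeg := by rw [Formula.pdeg_or]; omega
      have hψ : ψ.pdeg ≤ (φ.or ψ).pdeg := by rw [Formula.pdeg_or]; omega
      obtain ⟨π1, hπ1, he1⟩ := PP φ h.1 k (le_trans hφ hk)
      obtain ⟨π2, hπ2, he2⟩ := PP ψ h.2 k (le_trans hψ hk)
      obtain ⟨ρ, hρ, he⟩ := (mergePack k ((φ.or ψ).pdeg) hk).2.2.2.1 π1 π2
        (hπ1.mono hφ) (hπ2.mono hψ)
      exact ⟨ρ, hρ, (he1.or_congr he2).trans he.symm⟩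
  | .imp φ ψ, h, k, hk => by
      have hφ : φ.sdeg ≤ (φ.imp ψ).pdeg := by rw [Formula.pdeg_imp]; omega
      have hψ : ψ.pdeg ≤ (φ.imp ψ).pdeg := by rw [Formula.pdeg_imp]; omega
      obtain ⟨σ1, hσ1, he1⟩ := PS φ h.1 k (le_trans hφ hk)
      obtain ⟨π2, hπ2, he2⟩ := PP ψ h.2 k (le_trans hψ hk)
      obtain ⟨ρ, hρ, he⟩ := (mergePack k ((φ.imp ψ).pdeg) hk).2.2.2.2.2 σ1 π2
        (hσ1.mono hφ) (hπ2.mono hψ)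
      exact ⟨ρ, hρ, (he1.imp_congr he2).trans he.symm⟩
  | .all φ, h, k, hk => by
      have hφ : φ.pdeg ≤ φ.all.pdeg := Formula.pdeg_all_ge φ
      have h1 : 1 ≤ φ.all.pdeg := Formula.one_le_pdeg_all φ
      obtain ⟨π, hπ, he⟩ := PP φ h k (le_trans hφ hk)
      exact ⟨π.all, (hπ.mono hφ).all' h1, he.all_congr⟩
  | .ex φ, h, k, hk => by
      have hp : φ.sdeg + 1 ≤ φ.ex.pdeg := Formula.sdeg_le_of_pdeg_ex (le_refl _)
      have h2 : 2 ≤ φ.ex.pdeg := Formula.two_le_pdeg_ex φ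
      obtain ⟨σ, hσ, he⟩ := PS φ h k (by omega)
      refine ⟨σ.ex, ?_, he.ex_congr⟩
      have hσ' : IsSigma (φ.ex.pdeg - 1) σ := hσ.mono (by omega)
      exact ofSigma'' (hσ'.ex' (by omega)) (by omega)
end

/-- `F_k`-LEM from `Σ_k`-LEM: decidability of every formula of degree at most `k`. -/
theorem lemDec (k : ℕ) : ∀ (φ : Formula), φ.noDollar → φ.degree ≤ k →
    Proves (sigLEM k) (decf φ)
  | .falsum, _, _ => qf_dec trivial
  | .dollar, h, _ => h.elim
  | .eq t u, _, _ => .ha (.atomDec t u)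
  | .and φ ψ, h, hd => by
      rw [Formula.degree_and] at hd
      exact dec_and (lemDec k φ h.1 (by omega)) (lemDec k ψ h.2 (by omega))
  | .or φ ψ, h, hd => by
      rw [Formula.degree_or] at hd
      exact dec_or (lemDec k φ h.1 (by omega)) (lemDec k ψ h.2 (by omega))
  | .imp φ ψ, h, hd => by
      rw [Formula.degree_imp] at hd
      exact dec_imp (lemDec k φ h.1 (by omega)) (lemDec k ψ h.2 (by omega))
  | .ex φ, h, hd => by
      obtain ⟨σ, hσ, he⟩ := PS φ.ex h k (le_trans (Formula.sdeg_ex_le_degree φ) hd)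
      exact dec_transfer he (sigLEM_dec hσ (le_trans (Formula.sdeg_ex_le_degree φ) hd))
  | .all φ, h, hd => by
      obtain ⟨π, hπ, he⟩ := PP φ.all h k (le_trans (Formula.pdeg_all_le_degree φ) hd)
      exact dec_transfer he (piLEM hπ (le_trans (Formula.pdeg_all_le_degree φ) hd))


/-! ### Section 9: `$`-translation toolkit -/

section DollarToolkit
variable {T : Set Formula} {a b H X : Formula}

/-- `a → ¬_$¬_$ a` -/
theorem dd_intro : Proves T (a.imp a.negD.negD) :=
  show Sq T [a, a.negD] Formula.dollar from (Sq.h1 (φ := a.negD)).mp (Sq.h0 (φ := a))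

theorem dd_mono (h : Proves T (a.imp b)) : Proves T (a.negD.negD.imp b.negD.negD) := by
  refine show Sq T [a.negD.negD, b.negD] Formula.dollar from ?_
  refine (Sq.h0 (φ := a.negD.negD)).mp ?_
  refine Sq.intro (show Sq T [a, a.negD.negD, b.negD] Formula.dollar from ?_)
  exact (Sq.h2 (φ := b.negD)).mp ((Sq.ofProves h).mp (Sq.h0 (φ := a)))

theorem dd_congr (h : Eqv T a b) : Eqv T a.negD.negD b.negD.negD :=
  ⟨dd_mono h.1, dd_mono h.2⟩

theorem dd_stable : Proves T (a.negD.negD.negD.negD.imp a.negD.negD) := by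
  refine show Sq T [a.negD.negD.negD.negD, a.negD] Formula.dollar from ?_
  refine (Sq.h0 (φ := a.negD.negD.negD.negD)).mp ?_
  refine Sq.intro (show Sq T
    [a.negD.negD, a.negD.negD.negD.negD, a.negD] Formula.dollar from ?_)
  exact (Sq.h0 (φ := a.negD.negD)).mp (Sq.h2 (φ := a.negD))

theorem dollar_stable : Proves T (Formula.dollar.negD.negD.imp Formula.dollar) := by
  refine show Sq T [Formula.dollar.negD.negD] Formula.dollar from ?_
  exact (Sq.h0 (φ := Formula.dollar.negD.negD)).mp (Sq.intro (Sq.h0 (φ := Formula.dollar)))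

theorem dollar_imp_dd : Proves T (Formula.dollar.imp X.negD.negD) :=
  show Sq T [Formula.dollar, X.negD] Formula.dollar from Sq.h0

/-- `$ → φ^$` -/
theorem dollar_imp_tr : ∀ φ : Formula, Proves T (Formula.dollar.imp φ.dollarTr)
  | .falsum => imp_refl
  | .dollar => imp_refl
  | .eq t u => dollar_imp_dd
  | .and φ ψ =>
      show Sq T [Formula.dollar] (φ.dollarTr.and ψ.dollarTr) from
        Sq.andI ((Sq.ofProves (dollar_imp_tr φ)).mp Sq.h0)
          ((Sq.ofProves (dollar_imp_tr ψ)).mp Sq.h0)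
  | .or φ ψ => dollar_imp_dd
  | .imp φ ψ =>
      show Sq T [Formula.dollar, φ.dollarTr] ψ.dollarTr from
        (Sq.ofProves (dollar_imp_tr ψ)).mp (Sq.h0 (φ := Formula.dollar))
  | .all φ =>
      show Sq T [Formula.dollar] φ.dollarTr.all from
        Sq.allI ((Sq.ofProves (dollar_imp_tr φ)).mp (Sq.h0 (φ := Formula.dollar)))
  | .ex φ => dollar_imp_dd

/-- `¬_$¬_$ φ^$ → φ^$` -/
theorem stable_tr : ∀ φ : Formula, Proves T (φ.dollarTr.negD.negD.imp φ.dollarTr)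
  | .falsum => dollar_stable
  | .dollar => dollar_stable
  | .eq t u => dd_stable
  | .and φ ψ => by
      refine show Sq T [(φ.dollarTr.and ψ.dollarTr).negD.negD]
        (φ.dollarTr.and ψ.dollarTr) from ?_
      refine Sq.andI ((Sq.ofProves (stable_tr φ)).mp ?_) ((Sq.ofProves (stable_tr ψ)).mp ?_)
      · exact (Sq.ofProves (dd_mono (.ha (.andE1 _ _)))).mp Sq.h0
      · exact (Sq.ofProves (dd_mono (.ha (.andE2 _ _)))).mp Sq.h0
  | .or φ ψ => dd_stable
  | .imp φ ψ => by
      refine show Sq T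
        [(φ.dollarTr.imp ψ.dollarTr).negD.negD, φ.dollarTr] ψ.dollarTr from ?_
      refine (Sq.ofProves (stable_tr ψ)).mp ?_
      refine Sq.intro (show Sq T
        [ψ.dollarTr.negD, (φ.dollarTr.imp ψ.dollarTr).negD.negD, φ.dollarTr]
        Formula.dollar from ?_)
      refine (Sq.h1 (φ := (φ.dollarTr.imp ψ.dollarTr).negD.negD)).mp ?_
      refine Sq.intro (show Sq T
        [φ.dollarTr.imp ψ.dollarTr, ψ.dollarTr.negD,
          (φ.dollarTr.imp ψ.dollarTr).negD.negD, φ.dollarTr] Formula.dollar from ?_)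
      exact (Sq.h1 (φ := ψ.dollarTr.negD)).mp
        ((Sq.h0 (φ := φ.dollarTr.imp ψ.dollarTr)).mp (Sq.h3 (φ := φ.dollarTr)))
  | .all φ => by
      refine show Sq T [φ.dollarTr.all.negD.negD] φ.dollarTr.all from ?_
      refine Sq.allI ?_
      refine (Sq.ofProves (stable_tr φ)).mp ?_
      refine Sq.intro (show Sq T
        [φ.dollarTr.negD, (Formula.lift 1 φ.dollarTr).all.negD.negD]
        Formula.dollar from ?_)
      refine (Sq.h1 (φ := (Formula.lift 1 φ.dollarTr).all.negD.negD)).mp ?_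
      refine Sq.intro (show Sq T
        [(Formula.lift 1 φ.dollarTr).all, φ.dollarTr.negD,
          (Formula.lift 1 φ.dollarTr).all.negD.negD] Formula.dollar from ?_)
      have ha := Sq.allE' (T := T)
        (Γ := [(Formula.lift 1 φ.dollarTr).all, φ.dollarTr.negD,
          (Formula.lift 1 φ.dollarTr).all.negD.negD])
        (φ := Formula.lift 1 φ.dollarTr) (Term.var 0)
        (Sq.h0 (φ := (Formula.lift 1 φ.dollarTr).all))
      rw [fsvl] at ha
      exact (Sq.h1 (φ := φ.dollarTr.negD)).mp ha
  | .ex φ => dd_stable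

/-- `¬_$¬_$ X ↔ X ∨ $` for decidable `X` -/
theorem dd_dec_eqv (hdec : Proves T (decf X)) :
    Eqv T X.negD.negD (X.or Formula.dollar) := by
  constructor
  · refine show Sq T [X.negD.negD] (X.or Formula.dollar) from ?_
    refine (Sq.ofProves hdec).orE (Sq.orI1 Sq.h0) ?_
    refine Sq.orI2 ?_
    refine (Sq.h1 (φ := X.negD.negD)).mp ?_
    refine Sq.intro (show Sq T [X, X.neg, X.negD.negD] Formula.dollar from ?_)
    exact (Sq.h1 (φ := X.neg)).negE (Sq.h0 (φ := X))
  · refine show Sq T [X.or Formula.dollar] X.negD.negD from ?_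
    refine (Sq.h0 (φ := X.or Formula.dollar)).orE ?_ ?_
    · exact (Sq.ofProves dd_intro).mp Sq.h0
    · exact (Sq.ofProves dollar_imp_dd).mp Sq.h0

/-- `¬_$¬_$ (H ∨ $) ↔ H ∨ $` for decidable `H` -/
theorem dd_or_dollar (hdec : Proves T (decf H)) :
    Eqv T (H.or Formula.dollar).negD.negD (H.or Formula.dollar) := by
  constructor
  · refine show Sq T [(H.or Formula.dollar).negD.negD] (H.or Formula.dollar) from ?_
    refine (Sq.ofProves hdec).orE (Sq.orI1 Sq.h0) ?_
    refine Sq.orI2 ?_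
    refine (Sq.h1 (φ := (H.or Formula.dollar).negD.negD)).mp ?_
    refine Sq.intro (show Sq T
      [H.or Formula.dollar, H.neg, (H.or Formula.dollar).negD.negD]
      Formula.dollar from ?_)
    refine (Sq.h0 (φ := H.or Formula.dollar)).orE ?_ ?_
    · exact (Sq.h2 (φ := H.neg)).negE (Sq.h0 (φ := H))
    · exact Sq.h0
  · exact dd_intro

theorem or_dollar_merge : Eqv T ((a.or Formula.dollar).or (b.or Formula.dollar))
    ((a.or b).or Formula.dollar) := by
  constructor
  · refine show Sq T [(a.or Formula.dollar).or (b.or Formula.dollar)]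
      ((a.or b).or Formula.dollar) from ?_
    refine Sq.h0.orE ?_ ?_
    · exact Sq.h0.orE (Sq.orI1 (Sq.orI1 Sq.h0)) (Sq.orI2 Sq.h0)
    · exact Sq.h0.orE (Sq.orI1 (Sq.orI2 Sq.h0)) (Sq.orI2 Sq.h0)
  · refine show Sq T [(a.or b).or Formula.dollar]
      ((a.or Formula.dollar).or (b.or Formula.dollar)) from ?_
    refine Sq.h0.orE ?_ ?_
    · exact Sq.h0.orE (Sq.orI1 (Sq.orI1 Sq.h0)) (Sq.orI2 (Sq.orI1 Sq.h0))
    · exact Sq.orI1 (Sq.orI2 Sq.h0)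

theorem and_dollar_merge : Eqv T ((a.or Formula.dollar).and (b.or Formula.dollar))
    ((a.and b).or Formula.dollar) := by
  constructor
  · refine show Sq T [(a.or Formula.dollar).and (b.or Formula.dollar)]
      ((a.and b).or Formula.dollar) from ?_
    refine Sq.h0.andE1.orE ?_ ?_
    · refine (Sq.h1 (φ := (a.or Formula.dollar).and (b.or Formula.dollar))).andE2.orE ?_ ?_
      · exact Sq.orI1 (Sq.andI (Sq.h1 (φ := a)) (Sq.h0 (φ := b)))
      · exact Sq.orI2 Sq.h0
    · exact Sq.orI2 Sq.h0
  · refine show Sq T [(a.and b).or Formula.dollar]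
      ((a.or Formula.dollar).and (b.or Formula.dollar)) from ?_
    refine Sq.h0.orE ?_ ?_
    · exact Sq.andI (Sq.orI1 Sq.h0.andE1) (Sq.orI1 Sq.h0.andE2)
    · exact Sq.andI (Sq.orI2 Sq.h0) (Sq.orI2 Sq.h0)

theorem imp_dollar_merge (hdecA : Proves T (decf a)) (hdecB : Proves T (decf b)) :
    Eqv T ((a.or Formula.dollar).imp (b.or Formula.dollar))
      ((a.imp b).or Formula.dollar) := by
  constructor
  · refine show Sq T [(a.or Formula.dollar).imp (b.or Formula.dollar)]
      ((a.imp b).or Formula.dollar) from ?_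
    refine (Sq.ofProves hdecB).orE ?_ ?_
    · exact Sq.orI1 (Sq.intro (Sq.h1 (φ := b)))
    · refine (Sq.ofProves hdecA).orE ?_ ?_
      · -- [a, b.neg, imp]
        refine ((Sq.h2 (φ := (a.or Formula.dollar).imp (b.or Formula.dollar))).mp
          (Sq.orI1 (Sq.h0 (φ := a)))).orE ?_ ?_
        · exact ((Sq.h2 (φ := b.neg)).negE (Sq.h0 (φ := b)))
        · exact Sq.orI2 Sq.h0
      · refine Sq.orI1 (Sq.intro ?_)
        exact ((Sq.h1 (φ := a.neg)).negE (Sq.h0 (φ := a)))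
  · refine show Sq T [(a.imp b).or Formula.dollar]
      ((a.or Formula.dollar).imp (b.or Formula.dollar)) from ?_
    refine Sq.h0.orE ?_ ?_
    · refine Sq.intro ?_
      refine (Sq.h0 (φ := a.or Formula.dollar)).orE ?_ ?_
      · exact Sq.orI1 ((Sq.h2 (φ := a.imp b)).mp (Sq.h0 (φ := a)))
      · exact Sq.orI2 Sq.h0
    · exact Sq.intro (Sq.orI2 (Sq.h1 (φ := Formula.dollar)))

end DollarToolkit


/-! ### Section 10: the `(E)`-lemma: `φ^$ ↔ φ ∨ $` for `φ` of degree at most `k` -/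

theorem all_or_dollar {k : ℕ} {A : Formula}
    (hdecE : Proves (sigLEM k) (decf (Formula.ex A.neg)))
    (hdecA : Proves (sigLEM k) (decf A)) :
    Proves (sigLEM k) ((Formula.all (A.or Formula.dollar)).imp
      ((Formula.all A).or Formula.dollar)) := by
  refine show Sq (sigLEM k) [Formula.all (A.or Formula.dollar)]
    ((Formula.all A).or Formula.dollar) from ?_
  refine (Sq.ofProves hdecE).orE ?_ ?_
  · refine Sq.orI2 ?_
    refine Sq.exE (φ := A.neg) (Sq.h0 (φ := (A.neg).ex)) ?_
    have ha := Sq.allE' (T := sigLEM k)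
      (Γ := [A.neg, Formula.lift 0 (A.neg).ex,
        Formula.lift 0 (Formula.all (A.or Formula.dollar))])
      (φ := Formula.lift 1 (A.or Formula.dollar)) (Term.var 0)
      (Sq.h2 (φ := (Formula.lift 1 (A.or Formula.dollar)).all))
    rw [fsvl] at ha
    refine ha.orE ?_ ?_
    · exact (Sq.h1 (φ := A.neg)).negE (Sq.h0 (φ := A))
    · exact Sq.h0
  · refine Sq.orI1 (Sq.allI ?_)
    refine (Sq.ofProves hdecA).orE ?_ ?_
    · exact Sq.h0
    · refine (Sq.h1 (φ := (Formula.lift 1 A.neg).ex.neg)).negE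
        (Sq.exI' (Term.var 0) ?_)
      rw [fsvl]
      exact Sq.h0 (φ := A.neg)

theorem lemE (k : ℕ) : ∀ (φ : Formula), φ.noDollar → φ.degree ≤ k →
    Eqv (sigLEM k) φ.dollarTr (φ.or Formula.dollar)
  | .falsum, _, _ => by
      constructor
      · exact .ha (.orI2 _ _)
      · refine show Sq (sigLEM k) [Formula.falsum.or Formula.dollar] Formula.dollar from ?_
        exact Sq.h0.orE Sq.h0.exfalso Sq.h0
  | .dollar, h, _ => h.elim
  | .eq t u, _, _ => dd_dec_eqv (.ha (.atomDec t u))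
  | .and φ ψ, h, hd => by
      rw [Formula.degree_and] at hd
      exact ((lemE k φ h.1 (by omega)).and_congr (lemE k ψ h.2 (by omega))).trans
        and_dollar_merge
  | .or φ ψ, h, hd => by
      have hd' := hd
      rw [Formula.degree_or] at hd'
      have e := ((lemE k φ h.1 (by omega)).or_congr (lemE k ψ h.2 (by omega))).trans
        or_dollar_merge
      exact (dd_congr e).trans (dd_or_dollar (lemDec k (φ.or ψ) h hd))
  | .imp φ ψ, h, hd => by
      rw [Formula.degree_imp] at hd
      exact ((lemE k φ h.1 (by omega)).imp_congr (lemE k ψ h.2 (by omega))).trans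
        (imp_dollar_merge (lemDec k φ h.1 (by omega)) (lemDec k ψ h.2 (by omega)))
  | .ex φ, h, hd => by
      have e := lemE k φ h (le_trans (Formula.degree_ex_ge φ) hd)
      have e2 : Eqv (sigLEM k) φ.ex.dollarTr (((Formula.ex φ).or Formula.dollar).negD.negD) :=
        dd_congr (e.ex_congr.trans (sh_ex_or (a := φ) (b := Formula.dollar)).symm)
      exact e2.trans (dd_or_dollar (lemDec k φ.ex h hd))
  | .all φ, h, hd => by
      have e := lemE k φ h (le_trans (Formula.degree_all_ge φ) hd)
      have hdecA := lemDec k φ h (le_trans (Formula.degree_all_ge φ) hd)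
      have hne : (Formula.ex φ.neg).noDollar := show φ.noDollar ∧ True from ⟨h, trivial⟩
      have hdecE := lemDec k (Formula.ex φ.neg) hne
        (le_trans (Formula.degree_ex_neg_le φ) hd)
      constructor
      · exact imp_trans (all_mono e.1) (all_or_dollar hdecE hdecA)
      · refine show Sq (sigLEM k) [(Formula.all φ).or Formula.dollar]
          φ.dollarTr.all from ?_
        refine Sq.h0.orE ?_ ?_
        · exact (Sq.ofProves (all_mono (imp_trans (.ha (.orI1 φ Formula.dollar)) e.2))).mp
            Sq.h0
        · exact (Sq.ofProves (dollar_imp_tr φ.all)).mp Sq.h0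


/-! ### Section 11: soundness of the `$`-translation for `PA` -/

section TrSound
variable {T : Set Formula} {X Y Z : Formula}

/-- `¬_$¬_$ (X ∨ ¬_$ X)` (minimal-logic LEM under double `$`-negation). -/
theorem dd_lem : Proves T ((X.or X.negD).negD.negD) := by
  refine show Sq T [(X.or X.negD).negD] Formula.dollar from ?_
  refine (Sq.h0 (φ := (X.or X.negD).negD)).mp ?_
  refine Sq.orI2 ?_
  refine Sq.intro (show Sq T [X, (X.or X.negD).negD] Formula.dollar from ?_)
  exact (Sq.h1 (φ := (X.or X.negD).negD)).mp (Sq.orI1 (Sq.h0 (φ := X)))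

theorem tr_orE (hst : Proves T (Z.negD.negD.imp Z)) :
    Proves T ((X.imp Z).imp ((Y.imp Z).imp ((X.or Y).negD.negD.imp Z))) := by
  refine show Sq T [X.imp Z, Y.imp Z, (X.or Y).negD.negD] Z from ?_
  refine (Sq.ofProves hst).mp ?_
  refine Sq.intro (show Sq T
    [Z.negD, X.imp Z, Y.imp Z, (X.or Y).negD.negD] Formula.dollar from ?_)
  refine (Sq.h3 (φ := (X.or Y).negD.negD)).mp ?_
  refine Sq.intro (show Sq T
    [X.or Y, Z.negD, X.imp Z, Y.imp Z, (X.or Y).negD.negD] Formula.dollar from ?_)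
  refine (Sq.h1 (φ := Z.negD)).mp ?_
  refine (Sq.h0 (φ := X.or Y)).orE ?_ ?_
  · exact (Sq.h3 (φ := X.imp Z)).mp (Sq.h0 (φ := X))
  · exact (Sq.h4 (φ := Y.imp Z)).mp (Sq.h0 (φ := Y))

/-- soundness of the `$`-translation: a `PA`-proof of `χ` yields a proof
of `χ^$` in pure `HA` (hence over any axiom set). -/
theorem dollarTr_sound {χ : Formula} (h : Proves lemSet χ) : Proves T χ.dollarTr := by
  induction h with
  | ax hχ =>
      obtain ⟨φ, _, rfl⟩ := hχ
      exact dd_lem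
  | mp _ _ ih1 ih2 => exact .mp ih1 ih2
  | gen _ ih => exact .gen ih
  | ha hax =>
      cases hax with
      | axK φ ψ => exact .ha (.axK _ _)
      | axS φ ψ χ => exact .ha (.axS _ _ _)
      | andI φ ψ => exact .ha (.andI _ _)
      | andE1 φ ψ => exact .ha (.andE1 _ _)
      | andE2 φ ψ => exact .ha (.andE2 _ _)
      | orI1 φ ψ => exact imp_trans (.ha (.orI1 _ _)) dd_intro
      | orI2 φ ψ => exact imp_trans (.ha (.orI2 _ _)) dd_intro
      | orE φ ψ χ => exact tr_orE (stable_tr χ)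
      | efq φ => exact dollar_imp_tr φ
      | allE φ t =>
          show Proves T (φ.dollarTr.all.imp (φ.subst 0 t).dollarTr)
          rw [Formula.dollarTr_subst]
          exact .ha (.allE _ _)
      | exI φ t =>
          show Proves T ((φ.subst 0 t).dollarTr.imp φ.dollarTr.ex.negD.negD)
          rw [Formula.dollarTr_subst]
          exact imp_trans (.ha (.exI _ _)) dd_intro
      | allK φ ψ => exact .ha (.allK _ _)
      | allVac φ =>
          show Proves T (φ.dollarTr.imp (Formula.lift 0 φ).dollarTr.all)
          rw [Formula.dollarTr_lift]
          exact .ha (.allVac _)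
      | exE φ ψ =>
          show Proves T ((φ.dollarTr.imp (Formula.lift 0 ψ).dollarTr).all.imp
            (φ.dollarTr.ex.negD.negD.imp ψ.dollarTr))
          rw [Formula.dollarTr_lift]
          refine show Sq T [(φ.dollarTr.imp (Formula.lift 0 ψ.dollarTr)).all,
            φ.dollarTr.ex.negD.negD] ψ.dollarTr from ?_
          refine (Sq.ofProves (stable_tr ψ)).mp ?_
          refine Sq.intro (show Sq T
            [ψ.dollarTr.negD, (φ.dollarTr.imp (Formula.lift 0 ψ.dollarTr)).all,
              φ.dollarTr.ex.negD.negD] Formula.dollar from ?_)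
          refine (Sq.h2 (φ := φ.dollarTr.ex.negD.negD)).mp ?_
          refine Sq.intro (show Sq T
            [φ.dollarTr.ex, ψ.dollarTr.negD,
              (φ.dollarTr.imp (Formula.lift 0 ψ.dollarTr)).all,
              φ.dollarTr.ex.negD.negD] Formula.dollar from ?_)
          refine (Sq.h1 (φ := ψ.dollarTr.negD)).mp ?_
          exact ((Sq.ofProves (.ha (.exE φ.dollarTr ψ.dollarTr))).mp
            (Sq.h2 (φ := (φ.dollarTr.imp (Formula.lift 0 ψ.dollarTr)).all))).mp
            (Sq.h0 (φ := φ.dollarTr.ex))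
      | eqRefl t => exact .mp dd_intro (.ha (.eqRefl t))
      | eqSubst t u φ =>
          show Proves T ((Formula.eq t u).negD.negD.imp
            ((φ.subst 0 t).dollarTr.imp (φ.subst 0 u).dollarTr))
          rw [Formula.dollarTr_subst, Formula.dollarTr_subst]
          refine show Sq T [(Formula.eq t u).negD.negD, Formula.subst 0 t φ.dollarTr]
            (Formula.subst 0 u φ.dollarTr) from ?_
          have hst : Proves T ((Formula.subst 0 u φ.dollarTr).negD.negD.imp
              (Formula.subst 0 u φ.dollarTr)) := by
            have := stable_tr (T := T) (φ.subst 0 u)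
            rwa [Formula.dollarTr_subst] at this
          refine (Sq.ofProves hst).mp ?_
          refine Sq.intro (show Sq T
            [(Formula.subst 0 u φ.dollarTr).negD, (Formula.eq t u).negD.negD,
              Formula.subst 0 t φ.dollarTr] Formula.dollar from ?_)
          refine (Sq.h1 (φ := (Formula.eq t u).negD.negD)).mp ?_
          refine Sq.intro (show Sq T
            [Formula.eq t u, (Formula.subst 0 u φ.dollarTr).negD,
              (Formula.eq t u).negD.negD, Formula.subst 0 t φ.dollarTr]
            Formula.dollar from ?_)
          refine (Sq.h1 (φ := (Formula.subst 0 u φ.dollarTr).negD)).mp ?_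
          exact ((Sq.ofProves (.ha (.eqSubst t u φ.dollarTr))).mp
            (Sq.h0 (φ := Formula.eq t u))).mp (Sq.h3 (φ := Formula.subst 0 t φ.dollarTr))
      | succNeZero t =>
          show Proves T ((Formula.eq (Term.succ t) Term.zero).negD.negD.imp Formula.dollar)
          refine show Sq T [(Formula.eq (Term.succ t) Term.zero).negD.negD]
            Formula.dollar from ?_
          refine (Sq.h0 (φ := (Formula.eq (Term.succ t) Term.zero).negD.negD)).mp ?_
          refine Sq.intro (show Sq T [Formula.eq (Term.succ t) Term.zero,
            (Formula.eq (Term.succ t) Term.zero).negD.negD] Formula.dollar from ?_)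
          exact (Sq.ofProves (.ha (.succNeZero t))).negE
            (Sq.h0 (φ := Formula.eq (Term.succ t) Term.zero))
      | succInj t u => exact dd_mono (.ha (.succInj t u))
      | ind φ =>
          show Proves T ((φ.subst 0 Term.zero).dollarTr.imp
            (((φ.dollarTr.imp (φ.repl 0 (Term.succ (Term.var 0))).dollarTr)).all.imp
              φ.dollarTr.all))
          rw [Formula.dollarTr_subst, Formula.dollarTr_repl]
          exact .ha (.ind φ.dollarTr)
      | atomDec t u => exact dd_lem
end TrSound


/-! ### Section 12: substitution for the placeholder `$` preserves provability -/

theorem qf_noDollar : ∀ {φ : Formula}, φ.isQF → φ.noDollar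
  | .falsum, _ => trivial
  | .dollar, h => h.elim
  | .eq _ _, _ => trivial
  | .and _ _, h => ⟨qf_noDollar h.1, qf_noDollar h.2⟩
  | .or _ _, h => ⟨qf_noDollar h.1, qf_noDollar h.2⟩
  | .imp _ _, h => ⟨qf_noDollar h.1, qf_noDollar h.2⟩

mutual
theorem IsSigma.noDollar : ∀ {k : ℕ} {φ : Formula}, IsSigma k φ → φ.noDollar
  | _, _, .qf h => qf_noDollar h
  | _, _, .ofPi h => h.noDollar
  | _, _, .ex h => h.noDollar
theorem IsPi.noDollar : ∀ {k : ℕ} {φ : Formula}, IsPi k φ → φ.noDollar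
  | _, _, .qf h => qf_noDollar h
  | _, _, .ofSigma h => h.noDollar
  | _, _, .all h => h.noDollar
end

theorem haax_dsub {φ : Formula} (δ : Formula) (h : HAAx φ) : HAAx (Formula.dsub δ φ) := by
  cases h with
  | axK φ ψ => exact .axK _ _
  | axS φ ψ χ => exact .axS _ _ _
  | andI φ ψ => exact .andI _ _
  | andE1 φ ψ => exact .andE1 _ _
  | andE2 φ ψ => exact .andE2 _ _
  | orI1 φ ψ => exact .orI1 _ _
  | orI2 φ ψ => exact .orI2 _ _
  | orE φ ψ χ => exact .orE _ _ _
  | efq φ => exact .efq _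
  | allE φ t =>
      have e : Formula.dsub δ (φ.subst 0 t)
          = (Formula.dsub (Formula.lift 0 δ) φ).subst 0 t := by
        rw [Formula.dsub_subst, Formula.subst_lift_self]
      show HAAx ((Formula.dsub (Formula.lift 0 δ) φ).all.imp (Formula.dsub δ (φ.subst 0 t)))
      rw [e]
      exact .allE _ _
  | exI φ t =>
      have e : Formula.dsub δ (φ.subst 0 t)
          = (Formula.dsub (Formula.lift 0 δ) φ).subst 0 t := by
        rw [Formula.dsub_subst, Formula.subst_lift_self]
      show HAAx ((Formula.dsub δ (φ.subst 0 t)).imp (Formula.dsub (Formula.lift 0 δ) φ).ex)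
      rw [e]
      exact .exI _ _
  | allK φ ψ => exact .allK _ _
  | allVac φ =>
      show HAAx ((Formula.dsub δ φ).imp
        (Formula.dsub (Formula.lift 0 δ) (Formula.lift 0 φ)).all)
      rw [Formula.dsub_lift]
      exact .allVac _
  | exE φ ψ =>
      show HAAx (((Formula.dsub (Formula.lift 0 δ) φ).imp
        (Formula.dsub (Formula.lift 0 δ) (Formula.lift 0 ψ))).all.imp
        ((Formula.dsub (Formula.lift 0 δ) φ).ex.imp (Formula.dsub δ ψ)))
      rw [Formula.dsub_lift]
      exact .exE _ _
  | eqRefl t => exact .eqRefl _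
  | eqSubst t u φ =>
      have e1 : Formula.dsub δ (φ.subst 0 t)
          = (Formula.dsub (Formula.lift 0 δ) φ).subst 0 t := by
        rw [Formula.dsub_subst, Formula.subst_lift_self]
      have e2 : Formula.dsub δ (φ.subst 0 u)
          = (Formula.dsub (Formula.lift 0 δ) φ).subst 0 u := by
        rw [Formula.dsub_subst, Formula.subst_lift_self]
      show HAAx ((Formula.eq t u).imp
        ((Formula.dsub δ (φ.subst 0 t)).imp (Formula.dsub δ (φ.subst 0 u))))
      rw [e1, e2]
      exact .eqSubst _ _ _
  | succNeZero t => exact .succNeZero _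
  | succInj t u => exact .succInj _ _
  | ind φ =>
      have e1 : Formula.dsub δ (φ.subst 0 Term.zero)
          = (Formula.dsub (Formula.lift 0 δ) φ).subst 0 Term.zero := by
        rw [Formula.dsub_subst, Formula.subst_lift_self]
      have e2 : Formula.dsub (Formula.lift 0 δ) (φ.repl 0 (Term.succ (Term.var 0)))
          = (Formula.dsub (Formula.lift 0 δ) φ).repl 0 (Term.succ (Term.var 0)) := by
        rw [Formula.dsub_repl, Formula.repl_lift_self]
      show HAAx ((Formula.dsub δ (φ.subst 0 Term.zero)).imp
        (((Formula.dsub (Formula.lift 0 δ) φ).imp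
          (Formula.dsub (Formula.lift 0 δ) (φ.repl 0 (Term.succ (Term.var 0))))).all.imp
          (Formula.dsub (Formula.lift 0 δ) φ).all))
      rw [e1, e2]
      exact .ind _
  | atomDec t u => exact .atomDec _ _

theorem proves_dsub {k : ℕ} {χ : Formula} (h : Proves (sigLEM k) χ) :
    ∀ δ : Formula, Proves (sigLEM k) (Formula.dsub δ χ) := by
  induction h with
  | ax hχ =>
      intro δ
      obtain ⟨φ, hφ, rfl⟩ := hχ
      rw [Formula.dsub_noDollar δ (show (φ.or φ.neg).noDollar from
        ⟨hφ.noDollar, hφ.noDollar, trivial⟩)]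
      exact .ax ⟨φ, hφ, rfl⟩
  | ha hax => exact fun δ => .ha (haax_dsub δ hax)
  | mp _ _ ih1 ih2 => exact fun δ => .mp (ih1 δ) (ih2 δ)
  | gen _ ih => exact fun δ => .gen (ih (Formula.lift 0 δ))


/-! ### Section 13: class utilities -/

section MoreHyps
variable {T : Set Formula} {Γ : List Formula} {a b c d e φ : Formula}
theorem Sq.h5 : Sq T (a :: b :: c :: d :: e :: φ :: Γ) φ :=
  Sq.hyp_head.weak.weak.weak.weak.weak
end MoreHyps

mutual
theorem Rcl.noDollar : ∀ {k : ℕ} {φ : Formula}, Rcl k φ → φ.noDollar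
  | _, _, .base _ h => h
  | _, _, .and h1 h2 => ⟨h1.noDollar, h2.noDollar⟩
  | _, _, .or h1 h2 => ⟨h1.noDollar, h2.noDollar⟩
  | _, _, .all h => h.noDollar
  | _, _, .imp h1 h2 => ⟨h1.noDollar, h2.noDollar⟩
theorem Jcl.noDollar : ∀ {k : ℕ} {φ : Formula}, Jcl k φ → φ.noDollar
  | _, _, .base _ h => h
  | _, _, .and h1 h2 => ⟨h1.noDollar, h2.noDollar⟩
  | _, _, .or h1 h2 => ⟨h1.noDollar, h2.noDollar⟩
  | _, _, .ex h => h.noDollar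
  | _, _, .imp h1 h2 => ⟨h1.noDollar, h2.noDollar⟩
end

theorem Qcl.noDollar : ∀ {k : ℕ} {φ : Formula}, Qcl k φ → φ.noDollar
  | _, _, .falsum => trivial
  | _, _, .eq => trivial
  | _, _, .and h1 h2 => ⟨h1.noDollar, h2.noDollar⟩
  | _, _, .or h1 h2 => ⟨h1.noDollar, h2.noDollar⟩
  | _, _, .all h => h.noDollar
  | _, _, .ex h => h.noDollar
  | _, _, .imp h1 h2 => ⟨h1.noDollar, h2.noDollar⟩

mutual
theorem Rcl.lift : ∀ {k : ℕ} {φ : Formula}, Rcl k φ → ∀ d, Rcl k (Formula.lift d φ)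
  | _, _, .base hd hn, d => .base (by rwa [Formula.degree_lift]) (Formula.noDollar_lift d hn)
  | _, _, .and h1 h2, d => .and (h1.lift d) (h2.lift d)
  | _, _, .or h1 h2, d => .or (h1.lift d) (h2.lift d)
  | _, _, .all h, d => .all (h.lift (d+1))
  | _, _, .imp h1 h2, d => .imp (h1.lift d) (h2.lift d)
theorem Jcl.lift : ∀ {k : ℕ} {φ : Formula}, Jcl k φ → ∀ d, Jcl k (Formula.lift d φ)
  | _, _, .base hd hn, d => .base (by rwa [Formula.degree_lift]) (Formula.noDollar_lift d hn)
  | _, _, .and h1 h2, d => .and (h1.lift d) (h2.lift d)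
  | _, _, .or h1 h2, d => .or (h1.lift d) (h2.lift d)
  | _, _, .ex h, d => .ex (h.lift (d+1))
  | _, _, .imp h1 h2, d => .imp (h1.lift d) (h2.lift d)
end

theorem Qcl.lift : ∀ {k : ℕ} {φ : Formula}, Qcl k φ → ∀ d, Qcl k (Formula.lift d φ)
  | _, _, .falsum, _ => .falsum
  | _, _, .eq, _ => .eq
  | _, _, .and h1 h2, d => .and (h1.lift d) (h2.lift d)
  | _, _, .or h1 h2, d => .or (h1.lift d) (h2.lift d)
  | _, _, .all h, d => .all (h.lift (d+1))
  | _, _, .ex h, d => .ex (h.lift (d+1))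
  | _, _, .imp h1 h2, d => .imp (h1.lift d) (h2.lift d)

/-! ### Section 14: the core interpretation lemmas for `𝒥`/`ℛ` -/

theorem dd_pair {T : Set Formula} {a b : Formula} :
    Proves T (a.negD.negD.imp (b.negD.negD.imp (a.and b).negD.negD)) := by
  refine show Sq T [a.negD.negD, b.negD.negD, (a.and b).negD] Formula.dollar from ?_
  refine (Sq.h0 (φ := a.negD.negD)).mp (Sq.intro ?_)
  refine (Sq.h2 (φ := b.negD.negD)).mp (Sq.intro ?_)
  exact (Sq.h4 (φ := (a.and b).negD)).mp (Sq.andI (Sq.h1 (φ := a)) (Sq.h0 (φ := b)))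

section CoreJR
variable {k : ℕ}

mutual
theorem lemBJ : ∀ {J : Formula}, Jcl k J → ∀ C : Formula,
    Proves (sigLEM k) (Formula.dollar.imp C) →
    Proves (sigLEM k) (C.negD.negD.imp C) →
    Proves (sigLEM k) (J.dollarTr.imp ((J.imp C).imp C))
  | J, .base hdeg hnd, C, hdc, hst => by
      have e := lemE k J hnd hdeg
      refine show Sq (sigLEM k) [J.dollarTr, J.imp C] C from ?_
      refine ((Sq.ofProves e.1).mp (Sq.h0 (φ := J.dollarTr))).orE ?_ ?_
      · exact (Sq.h2 (φ := J.imp C)).mp (Sq.h0 (φ := J))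
      · exact (Sq.ofProves hdc).mp (Sq.h0 (φ := Formula.dollar))
  | _, .and (φ := a) (ψ := b) h1 h2, C, hdc, hst => by
      refine show Sq (sigLEM k) [a.dollarTr.and b.dollarTr, (a.and b).imp C] C from ?_
      refine ((Sq.ofProves (lemBJ h1 C hdc hst)).mp
        (Sq.h0 (φ := a.dollarTr.and b.dollarTr)).andE1).mp (Sq.intro ?_)
      refine ((Sq.ofProves (lemBJ h2 C hdc hst)).mp
        (Sq.h1 (φ := a.dollarTr.and b.dollarTr)).andE2).mp (Sq.intro ?_)
      exact (Sq.h3 (φ := (a.and b).imp C)).mp (Sq.andI (Sq.h1 (φ := a)) (Sq.h0 (φ := b)))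
  | _, .or (φ := a) (ψ := b) h1 h2, C, hdc, hst => by
      refine show Sq (sigLEM k)
        [(a.dollarTr.or b.dollarTr).negD.negD, (a.or b).imp C] C from ?_
      refine (Sq.ofProves hst).mp (Sq.intro ?_)
      refine (Sq.h1 (φ := (a.dollarTr.or b.dollarTr).negD.negD)).mp (Sq.intro ?_)
      refine (Sq.h1 (φ := C.negD)).mp ?_
      refine (Sq.h0 (φ := a.dollarTr.or b.dollarTr)).orE ?_ ?_
      · refine ((Sq.ofProves (lemBJ h1 C hdc hst)).mp (Sq.h0 (φ := a.dollarTr))).mp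
          (Sq.intro ?_)
        exact (Sq.h5 (φ := (a.or b).imp C)).mp (Sq.orI1 (Sq.h0 (φ := a)))
      · refine ((Sq.ofProves (lemBJ h2 C hdc hst)).mp (Sq.h0 (φ := b.dollarTr))).mp
          (Sq.intro ?_)
        exact (Sq.h5 (φ := (a.or b).imp C)).mp (Sq.orI2 (Sq.h0 (φ := b)))
  | _, .ex (φ := a) h', C, hdc, hst => by
      refine show Sq (sigLEM k) [a.dollarTr.ex.negD.negD, a.ex.imp C] C from ?_
      refine (Sq.ofProves hst).mp (Sq.intro ?_)
      refine (Sq.h1 (φ := a.dollarTr.ex.negD.negD)).mp (Sq.intro ?_)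
      refine (Sq.h1 (φ := C.negD)).mp ?_
      refine Sq.exE (φ := a.dollarTr) (Sq.h0 (φ := a.dollarTr.ex)) ?_
      refine ((Sq.ofProves (lemBJ h' (Formula.lift 0 C) (slift hdc 0) (slift hst 0))).mp
        (Sq.h0 (φ := a.dollarTr))).mp (Sq.intro ?_)
      refine (Sq.h5 (φ := Formula.lift 0 (a.ex.imp C))).mp ?_
      show Sq (sigLEM k) _ (Formula.lift 1 a).ex
      refine Sq.exI' (Term.var 0) ?_
      rw [fsvl]
      exact Sq.h0 (φ := a)
  | _, .imp (φ := R) (ψ := J0) hR hJ0, C, hdc, hst => by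
      refine show Sq (sigLEM k)
        [R.dollarTr.imp J0.dollarTr, (R.imp J0).imp C] C from ?_
      refine (Sq.ofProves hst).mp (Sq.intro ?_)
      refine ((Sq.ofProves (lemZR hR)).mp (Sq.intro ?_)).mp (Sq.intro ?_)
      · -- [R.neg, C.negD, f, u] ⊢ $
        refine (Sq.h1 (φ := C.negD)).mp
          ((Sq.h3 (φ := (R.imp J0).imp C)).mp (Sq.intro ?_))
        exact (Sq.h1 (φ := R.neg)).negE (Sq.h0 (φ := R))
      · -- [R^, C.negD, f, u] ⊢ $
        refine ((Sq.ofProves (lemBJ hJ0 Formula.dollar imp_refl dollar_stable)).mp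
          ((Sq.h2 (φ := R.dollarTr.imp J0.dollarTr)).mp (Sq.h0 (φ := R.dollarTr)))).mp
          (Sq.intro ?_)
        -- [J0, R^, C.negD, f, u] ⊢ $
        refine (Sq.h2 (φ := C.negD)).mp
          ((Sq.h4 (φ := (R.imp J0).imp C)).mp (Sq.intro ?_))
        -- [R, J0, R^, C.negD, f, u] ⊢ J0
        exact Sq.h1 (φ := J0)

theorem lemZR : ∀ {R : Formula}, Rcl k R →
    Proves (sigLEM k) ((R.neg.imp Formula.dollar).imp R.dollarTr.negD.negD)
  | R, .base hdeg hnd => by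
      refine show Sq (sigLEM k) [R.neg.imp Formula.dollar, R.dollarTr.negD]
        Formula.dollar from ?_
      refine (Sq.ofProves (lemDec k R hnd hdeg)).orE ?_ ?_
      · exact (Sq.h2 (φ := R.dollarTr.negD)).mp
          ((Sq.ofProves (lemE k R hnd hdeg).2).mp (Sq.orI1 (Sq.h0 (φ := R))))
      · exact (Sq.h1 (φ := R.neg.imp Formula.dollar)).mp (Sq.h0 (φ := R.neg))
  | _, .and (φ := a) (ψ := b) h1 h2 => by
      refine show Sq (sigLEM k) [(a.and b).neg.imp Formula.dollar]
        ((a.dollarTr.and b.dollarTr).negD.negD) from ?_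
      have q1 : Sq (sigLEM k) [(a.and b).neg.imp Formula.dollar] a.dollarTr.negD.negD := by
        refine (Sq.ofProves (lemZR h1)).mp (Sq.intro ?_)
        refine (Sq.h1 (φ := (a.and b).neg.imp Formula.dollar)).mp (Sq.intro ?_)
        exact (Sq.h1 (φ := a.neg)).mp (Sq.h0 (φ := a.and b)).andE1
      have q2 : Sq (sigLEM k) [(a.and b).neg.imp Formula.dollar] b.dollarTr.negD.negD := by
        refine (Sq.ofProves (lemZR h2)).mp (Sq.intro ?_)
        refine (Sq.h1 (φ := (a.and b).neg.imp Formula.dollar)).mp (Sq.intro ?_)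
        exact (Sq.h1 (φ := b.neg)).mp (Sq.h0 (φ := a.and b)).andE2
      exact ((Sq.ofProves dd_pair).mp q1).mp q2
  | _, .or (φ := a) (ψ := b) h1 h2 => by
      refine show Sq (sigLEM k) [(a.or b).neg.imp Formula.dollar]
        ((a.dollarTr.or b.dollarTr).negD.negD.negD.negD) from ?_
      refine (Sq.ofProves dd_intro).mp ?_
      refine Sq.intro ?_
      -- [q : (Na∨Nb).negD, b'] ⊢ $
      refine ((Sq.ofProves (lemZR h1)).mp (Sq.intro ?_)).mp (Sq.intro ?_)
      · -- [a.neg, q, b'] ⊢ $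
        refine ((Sq.ofProves (lemZR h2)).mp (Sq.intro ?_)).mp (Sq.intro ?_)
        · -- [b.neg, a.neg, q, b'] ⊢ $
          refine (Sq.h3 (φ := (a.or b).neg.imp Formula.dollar)).mp (Sq.intro ?_)
          -- [a∨b, b.neg, a.neg, q, b'] ⊢ ⊥
          refine (Sq.h0 (φ := a.or b)).orE ?_ ?_
          · exact (Sq.h3 (φ := a.neg)).mp (Sq.h0 (φ := a))
          · exact (Sq.h2 (φ := b.neg)).mp (Sq.h0 (φ := b))
        · -- [Nb, a.neg, q, b'] ⊢ $
          exact (Sq.h2 (φ := (a.dollarTr.or b.dollarTr).negD)).mp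
            (Sq.orI2 (Sq.h0 (φ := b.dollarTr)))
      · -- [Na, q, b'] ⊢ $
        exact (Sq.h1 (φ := (a.dollarTr.or b.dollarTr).negD)).mp
          (Sq.orI1 (Sq.h0 (φ := a.dollarTr)))
  | _, .all (φ := a) h' => by
      refine show Sq (sigLEM k) [(Formula.all a).neg.imp Formula.dollar]
        (a.dollarTr.all.negD.negD) from ?_
      refine Sq.intro ?_
      -- [q : (all Na).negD, b'] ⊢ $
      refine (Sq.h0 (φ := a.dollarTr.all.negD)).mp (Sq.allI ?_)
      -- [lift0 q, lift0 b'] ⊢ Na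
      refine (Sq.ofProves (stable_tr a)).mp ?_
      refine (Sq.ofProves (lemZR h')).mp (Sq.intro ?_)
      -- [a.neg, lift0 q, lift0 b'] ⊢ $
      refine (Sq.h2 (φ := Formula.lift 0 ((Formula.all a).neg.imp Formula.dollar))).mp
        (Sq.intro ?_)
      -- [all (lift1 a), a.neg, lift0 q, lift0 b'] ⊢ ⊥
      have ha := Sq.allE' (T := sigLEM k)
        (Γ := [(Formula.lift 1 a).all, a.neg,
          Formula.lift 0 (a.dollarTr.all.negD),
          Formula.lift 0 ((Formula.all a).neg.imp Formula.dollar)])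
        (φ := Formula.lift 1 a) (Term.var 0) (Sq.h0 (φ := (Formula.lift 1 a).all))
      rw [fsvl] at ha
      exact (Sq.h1 (φ := a.neg)).mp ha
  | _, .imp (φ := J1) (ψ := R0) hJ1 hR0 => by
      refine show Sq (sigLEM k) [(J1.imp R0).neg.imp Formula.dollar]
        ((J1.dollarTr.imp R0.dollarTr).negD.negD) from ?_
      refine Sq.intro ?_
      -- [q : (NJ1→NR0).negD, b'] ⊢ $
      refine (Sq.h0 (φ := (J1.dollarTr.imp R0.dollarTr).negD)).mp (Sq.intro ?_)
      -- [NJ1, q, b'] ⊢ NR0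
      refine (Sq.ofProves (stable_tr R0)).mp (Sq.intro ?_)
      -- [NR0.negD, NJ1, q, b'] ⊢ $
      refine ((Sq.ofProves (lemBJ hJ1 Formula.dollar imp_refl dollar_stable)).mp
        (Sq.h1 (φ := J1.dollarTr))).mp (Sq.intro ?_)
      -- [J1, NR0.negD, NJ1, q, b'] ⊢ $
      refine ((Sq.ofProves (lemZR hR0)).mp (Sq.intro ?_)).mp
        (Sq.h1 (φ := R0.dollarTr.negD))
      -- [R0.neg, J1, NR0.negD, NJ1, q, b'] ⊢ $
      refine (Sq.h5 (φ := (J1.imp R0).neg.imp Formula.dollar)).mp (Sq.intro ?_)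
      -- [J1→R0, R0.neg, J1, NR0.negD, NJ1, q, b'] ⊢ ⊥
      exact (Sq.h1 (φ := R0.neg)).mp
        ((Sq.h0 (φ := J1.imp R0)).mp (Sq.h2 (φ := J1)))
end

end CoreJR


/-! ### Section 15: the `(A)`-lemma for `𝒬` and the final assembly -/

theorem lemAQ {k : ℕ} : ∀ {ψ : Formula}, Qcl k ψ → Proves (sigLEM k) (ψ.imp ψ.dollarTr)
  | _, .falsum => .ha (.efq Formula.dollar)
  | _, .eq => dd_intro
  | _, .and (φ := a) (ψ := b) h1 h2 =>
      show Sq (sigLEM k) [a.and b] (a.dollarTr.and b.dollarTr) from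
        Sq.andI ((Sq.ofProves (lemAQ h1)).mp (Sq.h0 (φ := a.and b)).andE1)
          ((Sq.ofProves (lemAQ h2)).mp (Sq.h0 (φ := a.and b)).andE2)
  | _, .or (φ := a) (ψ := b) h1 h2 => by
      refine show Sq (sigLEM k) [a.or b] ((a.dollarTr.or b.dollarTr).negD.negD) from ?_
      refine (Sq.ofProves dd_intro).mp ?_
      refine (Sq.h0 (φ := a.or b)).orE ?_ ?_
      · exact Sq.orI1 ((Sq.ofProves (lemAQ h1)).mp (Sq.h0 (φ := a)))
      · exact Sq.orI2 ((Sq.ofProves (lemAQ h2)).mp (Sq.h0 (φ := b)))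
  | _, .all h => all_mono (lemAQ h)
  | _, .ex h => imp_trans (ex_mono (lemAQ h)) dd_intro
  | _, .imp (φ := J) (ψ := Q) hJ hQ => by
      refine show Sq (sigLEM k) [J.imp Q, J.dollarTr] Q.dollarTr from ?_
      refine ((Sq.ofProves (lemBJ hJ Q.dollarTr (dollar_imp_tr Q) (stable_tr Q))).mp
        (Sq.h1 (φ := J.dollarTr))).mp (Sq.intro ?_)
      exact (Sq.ofProves (lemAQ hQ)).mp
        ((Sq.h1 (φ := J.imp Q)).mp (Sq.h0 (φ := J)))

theorem conservationAux (k : ℕ) : ∀ {φ : Formula}, Vcl k φ → ∀ {ψ : Formula}, Qcl k ψ →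
    Proves lemSet (ψ.imp φ) → Proves (sigLEM k) (ψ.imp φ)
  | _, .ofJ (φ := J) hJ, ψ, hψ, h => by
      have s1 : Proves (sigLEM k) (ψ.dollarTr.imp J.dollarTr) := dollarTr_sound h
      have s2 : Proves (sigLEM k)
          ((Formula.dsub J ψ.dollarTr).imp (Formula.dsub J J.dollarTr)) :=
        proves_dsub s1 J
      have sA : Proves (sigLEM k)
          ((Formula.dsub J ψ).imp (Formula.dsub J ψ.dollarTr)) :=
        proves_dsub (lemAQ hψ) J
      rw [Formula.dsub_noDollar J hψ.noDollar] at sA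
      have sB : Proves (sigLEM k) ((Formula.dsub J J.dollarTr).imp
          (((Formula.dsub J J).imp J).imp J)) :=
        proves_dsub (lemBJ hJ Formula.dollar imp_refl dollar_stable) J
      rw [Formula.dsub_noDollar J hJ.noDollar] at sB
      have sB' : Proves (sigLEM k) ((Formula.dsub J J.dollarTr).imp J) := by
        refine show Sq (sigLEM k) [Formula.dsub J J.dollarTr] J from ?_
        exact ((Sq.ofProves sB).mp (Sq.h0 (φ := Formula.dsub J J.dollarTr))).mp
          (Sq.ofProves imp_refl)
      exact imp_trans sA (imp_trans s2 sB')
  | _, .and (φ := a) (ψ := b) h1 h2, ψ, hψ, h => by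
      have ha := conservationAux k h1 hψ (imp_trans h (.ha (.andE1 a b)))
      have hb := conservationAux k h2 hψ (imp_trans h (.ha (.andE2 a b)))
      exact show Sq (sigLEM k) [ψ] (a.and b) from
        Sq.andI ((Sq.ofProves ha).mp (Sq.h0 (φ := ψ)))
          ((Sq.ofProves hb).mp (Sq.h0 (φ := ψ)))
  | _, .all (φ := a) h', ψ, hψ, h => by
      have hl : Proves lemSet ((Formula.lift 0 ψ).imp (Formula.lift 1 a).all) :=
        proves_lift lemSet_lift h 0
      have hinst : Proves lemSet ((Formula.lift 1 a).all.imp a) := by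
        have h2 := Proves.ha (T := lemSet) (.allE (Formula.lift 1 a) (Term.var 0))
        rwa [fsvl] at h2
      have h'' := conservationAux k h' (hψ.lift 0) (imp_trans hl hinst)
      exact imp_trans (.ha (.allVac ψ)) (all_mono h'')


/-- if `PA ⊢ ψ → φ` with `φ ∈ 𝒱_{k+1}` and `ψ ∈ 𝒬_{k+1}`,
then `HA + Σ_k-LEM ⊢ ψ → φ`. -/
theorem conservation_V_Q (k : ℕ) (φ ψ : Formula) (hφ : Vcl k φ) (hψ : Qcl k ψ)
    (h : Proves lemSet (ψ.imp φ)) : Proves (sigLEM k) (ψ.imp φ) :=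
  conservationAux k hφ hψ h

end SemiClassicalArith
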